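/- arXiv:0903.5237 — 8 statements merged into one kernel-verified Lean document; each statement's English description precedes it below -/
import Mathlib

section
/- Let Λ be an n×n complex diagonal matrix whose diagonal entries are pairwise distinct, and let T be any n×n complex matrix. Define an undirected graph G on the vertex set {1,…,n} by joining i and j (i ≠ j) whenever T_{ij} ≠ 0 or T_{ji} ≠ 0. Then the only subspaces of ℂⁿ invariant under all four matrices Λ, Λ†, T, T† are 0 and ℂⁿ if and only if G is connected. -/
/-!
A subspace invariant under a diagonal matrix `diagonal d` with distinct entries is invariant
under every `diagonal (p ∘ d)` with `p` a polynomial; taking for `p` the Lagrange basis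
polynomials shows that it is spanned by the standard basis vectors it contains, i.e. it is
the space of vectors supported on some set `S` of indices. Invariance under `T` and `Tᴴ` then
says exactly that `S` is closed under adjacency in the graph of `T`, and a nonempty graph is
connected iff its only adjacency-closed vertex sets are `∅` and `univ`.
-/

open scoped Matrix

open Polynomial

theorem SimpleGraph.Reachable.mem_of_forall_adj_mem {V : Type*} {G : SimpleGraph V}
    {S : Set V} (hS : ∀ u v, G.Adj u v → u ∈ S → v ∈ S) {u v : V} (h : G.Reachable u v)
    (hu : u ∈ S) : v ∈ S := by
  rw [SimpleGraph.reachable_eq_reflTransGen] at h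
  induction h with
  | refl => exact hu
  | tail _ hadj ih => exact hS _ _ hadj ih

theorem SimpleGraph.connected_iff_forall_adj_closed {V : Type*} [Nonempty V]
    (G : SimpleGraph V) :
    G.Connected ↔ ∀ S : Set V, (∀ u v, G.Adj u v → u ∈ S → v ∈ S) → S = ∅ ∨ S = Set.univ := by
  constructor
  · intro hG S hS
    refine S.eq_empty_or_nonempty.imp_right fun ⟨u, hu⟩ => ?_
    exact Set.eq_univ_of_forall fun v => (hG.preconnected u v).mem_of_forall_adj_mem hS hu
  · intro h
    obtain ⟨u⟩ := ‹Nonempty V›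
    rcases h {v | G.Reachable u v} fun v w hvw huv => huv.trans hvw.reachable with hS | hS
    · exact (Set.eq_empty_iff_forall_notMem.1 hS u (SimpleGraph.Reachable.refl u)).elim
    · exact G.connected_iff_exists_forall_reachable.2 ⟨u, Set.eq_univ_iff_forall.1 hS⟩

theorem Matrix.aeval_diagonal {R ι : Type*} [CommSemiring R] [Fintype ι] [DecidableEq ι]
    (d : ι → R) (p : R[X]) :
    aeval (Matrix.diagonal d) p = Matrix.diagonal fun j => p.eval (d j) := by
  rw [← Matrix.diagonalAlgHom_apply (R := R), aeval_algHom_apply, aeval_pi_apply]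
  simp

section SupportedOn

variable {ι : Type*}

def supportedOn (K : Type*) [Semiring K] (S : Set ι) : Submodule K (ι → K) :=
  Submodule.pi Sᶜ fun _ => ⊥

variable {K : Type*} [Semiring K] {S : Set ι}

@[simp]
theorem mem_supportedOn {v : ι → K} : v ∈ supportedOn K S ↔ ∀ i ∉ S, v i = 0 := by
  simp [supportedOn]

theorem mulVec_mem_supportedOn [Fintype ι] {M : Matrix ι ι K}
    (hM : ∀ k l, k ∉ S → l ∈ S → M k l = 0) {v : ι → K} (hv : v ∈ supportedOn K S) :
    M *ᵥ v ∈ supportedOn K S := by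
  rw [mem_supportedOn] at hv ⊢
  intro k hk
  simp only [Matrix.mulVec, dotProduct]
  refine Finset.sum_eq_zero fun l _ => ?_
  by_cases hl : l ∈ S
  · rw [hM k l hk hl, zero_mul]
  · rw [hv l hl, mul_zero]

variable [DecidableEq ι] [Nontrivial K]

theorem supportedOn_eq_bot_iff : supportedOn K S = ⊥ ↔ S = ∅ := by
  constructor
  · refine fun h => Set.eq_empty_of_forall_notMem fun i hi => ?_
    have hsingle : Pi.single i (1 : K) ∈ supportedOn K S := by
      rw [mem_supportedOn]
      intro k hk
      exact Pi.single_eq_of_ne (by rintro rfl; exact hk hi) 1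
    rw [h, Submodule.mem_bot] at hsingle
    simpa using congrFun hsingle i
  · rintro rfl
    exact (Submodule.eq_bot_iff _).2 fun v hv => funext fun i => mem_supportedOn.1 hv i id

theorem supportedOn_eq_top_iff : supportedOn K S = ⊤ ↔ S = Set.univ := by
  constructor
  · refine fun h => Set.eq_univ_of_forall fun i => by_contra fun hi => ?_
    have hsingle : Pi.single i (1 : K) ∈ supportedOn K S := h ▸ Submodule.mem_top
    simpa using mem_supportedOn.1 hsingle i hi
  · rintro rfl
    exact eq_top_iff.2 fun v _ => mem_supportedOn.2 fun i hi => absurd (Set.mem_univ i) hi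

end SupportedOn

section DiagonalInvariant

variable {ι : Type*} [Fintype ι] [DecidableEq ι]

theorem diagonal_eval_mulVec_mem {K : Type*} [CommSemiring K] {d : ι → K}
    {W : Submodule K (ι → K)} (hW : ∀ v ∈ W, Matrix.diagonal d *ᵥ v ∈ W) (p : K[X])
    {v : ι → K} (hv : v ∈ W) : Matrix.diagonal (fun j => p.eval (d j)) *ᵥ v ∈ W := by
  have h := aeval_apply_smul_mem_of_le_comap hv p (Matrix.toLinAlgEquiv' (Matrix.diagonal d)) hW
  rwa [aeval_algEquiv, AlgHom.comp_apply, AlgEquiv.coe_toAlgHom, Matrix.toLinAlgEquiv'_apply,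
    Matrix.aeval_diagonal] at h

variable {K : Type*} [Field K] {d : ι → K} {W : Submodule K (ι → K)}

theorem single_mem_of_diagonal_invariant (hd : Function.Injective d)
    (hW : ∀ v ∈ W, Matrix.diagonal d *ᵥ v ∈ W) {v : ι → K} (hv : v ∈ W) {i : ι}
    (hvi : v i ≠ 0) : Pi.single i 1 ∈ W := by
  have hproj : Matrix.diagonal (fun j => (Lagrange.basis Finset.univ d i).eval (d j)) *ᵥ v =
      Pi.single i (v i) := by
    funext j
    rw [Matrix.mulVec_diagonal]
    rcases eq_or_ne j i with rfl | hji
    · simp [Lagrange.eval_basis_self hd.injOn (Finset.mem_univ j)]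
    · simp [Lagrange.eval_basis_of_ne hji.symm (Finset.mem_univ j), hji]
  have h := W.smul_mem (v i)⁻¹ (hproj ▸ diagonal_eval_mulVec_mem hW _ hv)
  rwa [← Pi.single_smul, smul_eq_mul, inv_mul_cancel₀ hvi] at h

theorem eq_supportedOn_of_diagonal_invariant (hd : Function.Injective d)
    (hW : ∀ v ∈ W, Matrix.diagonal d *ᵥ v ∈ W) :
    W = supportedOn K {i | Pi.single i 1 ∈ W} := by
  ext v
  constructor
  · intro hv
    rw [mem_supportedOn]
    exact fun i hi => by_contra fun hvi => hi (single_mem_of_diagonal_invariant hd hW hv hvi)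
  · intro hv
    rw [← Finset.univ_sum_single v]
    refine W.sum_mem fun i _ => ?_
    by_cases hi : Pi.single i 1 ∈ W
    · simpa [← Pi.single_smul] using W.smul_mem (v i) hi
    · simp [mem_supportedOn.1 hv i hi]

theorem single_mem_of_mulVec_invariant (hd : Function.Injective d)
    (hW : ∀ v ∈ W, Matrix.diagonal d *ᵥ v ∈ W) {M : Matrix ι ι K} (hM : ∀ v ∈ W, M *ᵥ v ∈ W)
    {a b : ι} (ha : Pi.single a 1 ∈ W) (hba : M b a ≠ 0) : Pi.single b 1 ∈ W := by
  have hcol := hM _ ha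
  rw [Matrix.mulVec_single_one] at hcol
  exact single_mem_of_diagonal_invariant hd hW hcol hba

end DiagonalInvariant

theorem Matrix.apply_eq_zero_of_forall_adj_mem {ι R : Type*} [Zero R] {T : Matrix ι ι R}
    {S : Set ι} (hS : ∀ u v, (SimpleGraph.fromRel fun i j => T i j ≠ 0).Adj u v → u ∈ S → v ∈ S)
    {k l : ι} (hk : k ∉ S) (hl : l ∈ S) : T k l = 0 ∧ T l k = 0 := by
  have hnadj := mt (hS l k · hl) hk
  simp only [SimpleGraph.fromRel_adj, not_and, not_or, not_not] at hnadj
  exact (hnadj fun hlk => hk (hlk ▸ hl)).symm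

/-- For `Λ` diagonal with pairwise distinct diagonal entries and `T` arbitrary, the
representation is irreducible (the only subspaces invariant under `Λ, Λᴴ, T, Tᴴ` are
`0` and `ℂⁿ`) if and only if the undirected graph joining `i ≠ j` whenever
`T i j ≠ 0` or `T j i ≠ 0` is connected. -/
theorem irreducible_iff_graph_connected (n : ℕ) (hn : 0 < n)
    (dΛ : Fin n → ℂ) (hdistinct : Function.Injective dΛ)
    (Λ T : Matrix (Fin n) (Fin n) ℂ) (hΛ : Λ = Matrix.diagonal dΛ) :
    (∀ W : Submodule ℂ (Fin n → ℂ),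
        (∀ v ∈ W, Λ.mulVec v ∈ W) → (∀ v ∈ W, Λᴴ.mulVec v ∈ W) →
        (∀ v ∈ W, T.mulVec v ∈ W) → (∀ v ∈ W, Tᴴ.mulVec v ∈ W) →
        W = ⊥ ∨ W = ⊤) ↔
      (SimpleGraph.fromRel (fun i j : Fin n => T i j ≠ 0)).Connected := by
  subst hΛ
  have : Nonempty (Fin n) := ⟨⟨0, hn⟩⟩
  rw [SimpleGraph.connected_iff_forall_adj_closed]
  constructor
  · intro hirr S hS
    have hdiag (e : Fin n → ℂ) : ∀ k l, k ∉ S → l ∈ S → Matrix.diagonal e k l = 0 :=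
      fun k l hk hl => Matrix.diagonal_apply_ne _ fun hkl => hk (hkl ▸ hl)
    rw [← supportedOn_eq_bot_iff (K := ℂ), ← supportedOn_eq_top_iff (K := ℂ)]
    refine hirr _ (fun _ => mulVec_mem_supportedOn (hdiag dΛ))
      (fun _ => mulVec_mem_supportedOn (Matrix.diagonal_conjTranspose dΛ ▸ hdiag _))
      (fun _ => mulVec_mem_supportedOn fun k l hk hl =>
        (Matrix.apply_eq_zero_of_forall_adj_mem hS hk hl).1)
      (fun _ => mulVec_mem_supportedOn fun k l hk hl => by
        simp [(Matrix.apply_eq_zero_of_forall_adj_mem hS hk hl).2])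
  · intro hconn W hΛW _ hTW hTHW
    rw [eq_supportedOn_of_diagonal_invariant hdistinct hΛW, supportedOn_eq_bot_iff,
      supportedOn_eq_top_iff]
    refine hconn _ fun a b hab ha => ?_
    obtain ⟨-, hab | hba⟩ := hab
    · exact single_mem_of_mulVec_invariant hdistinct hΛW hTHW ha (by simpa using hab)
    · exact single_mem_of_mulVec_invariant hdistinct hΛW hTW ha hba
end

section
/- Let n ≥ 1, let μ be a real number, and let Λ and T be n×n unitary complex matrices satisfying 2μΛ = [[Λ,Λ†],Λ] + [[Λ,T],T†] + [[Λ,T†],T] and 2μT = [[T,T†],T] + [[T,Λ],Λ†] + [[T,Λ†],Λ]. Then 0 ≤ μ ≤ 4. Equivalently, if μ < 0 or μ > 4 there exists no unitary representation of U₄(A) with Spec(A) = {μ}. -/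
/-!
For unitary `Λ`, `T` the double commutators collapse: `[Λ, Λ†] = 0`, and
`[[Λ,T],T†] + [[Λ,T†],T] = 4Λ - 2(TΛT† + T†ΛT)`. Multiplying the first equation on the right
by `Λ†` and taking traces gives `(2 - μ) n = tr(TΛT†Λ†) + tr(T†ΛTΛ†)`, a sum of two traces of
unitary matrices, each of modulus at most `n`. Hence `|2 - μ| ≤ 2`.
-/

open scoped Matrix BigOperators

/-- The commutator `[A,B] = AB − BA` of square matrices. -/
noncomputable def matComm {n : ℕ} (A B : Matrix (Fin n) (Fin n) ℂ) : Matrix (Fin n) (Fin n) ℂ :=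
  A * B - B * A

open Matrix

theorem Matrix.norm_trace_le_card_of_mem_unitaryGroup {𝕜 ι : Type*} [RCLike 𝕜] [Fintype ι]
    [DecidableEq ι] {U : Matrix ι ι 𝕜} (hU : U ∈ unitaryGroup ι 𝕜) :
    ‖U.trace‖ ≤ Fintype.card ι :=
  calc ‖U.trace‖ ≤ ∑ i, ‖U i i‖ := norm_sum_le _ _
    _ ≤ ∑ _i : ι, (1 : ℝ) := Finset.sum_le_sum fun i _ => entry_norm_bound_of_unitary hU i i
    _ = Fintype.card ι := by simp

section Unitary

variable {ι α : Type*} [Fintype ι] [DecidableEq ι] [CommRing α] [StarRing α] {U : Matrix ι ι α}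

theorem Matrix.conjTranspose_mul_self_of_mem_unitaryGroup (hU : U ∈ unitaryGroup ι α) :
    Uᴴ * U = 1 :=
  mem_unitaryGroup_iff'.mp hU

theorem Matrix.mul_conjTranspose_self_of_mem_unitaryGroup (hU : U ∈ unitaryGroup ι α) :
    U * Uᴴ = 1 :=
  mem_unitaryGroup_iff.mp hU

end Unitary

section Commutator

variable {n : ℕ} {U : Matrix (Fin n) (Fin n) ℂ}

theorem matComm_self_conjTranspose_of_mem_unitaryGroup (hU : U ∈ unitaryGroup (Fin n) ℂ) :
    matComm U Uᴴ = 0 := by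
  rw [matComm, mul_conjTranspose_self_of_mem_unitaryGroup hU,
    conjTranspose_mul_self_of_mem_unitaryGroup hU, sub_self]

theorem matComm_matComm_add_matComm_matComm_of_mem_unitaryGroup
    (hU : U ∈ unitaryGroup (Fin n) ℂ) (A : Matrix (Fin n) (Fin n) ℂ) :
    matComm (matComm A U) Uᴴ + matComm (matComm A Uᴴ) U
      = (4 : ℂ) • A - (2 : ℂ) • (U * A * Uᴴ + Uᴴ * A * U) := by
  have h₁ := conjTranspose_mul_self_of_mem_unitaryGroup hU
  have h₂ := mul_conjTranspose_self_of_mem_unitaryGroup hU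
  have h₁' : ∀ X : Matrix (Fin n) (Fin n) ℂ, Uᴴ * (U * X) = X := fun X => by
    rw [← Matrix.mul_assoc, h₁, Matrix.one_mul]
  have h₂' : ∀ X : Matrix (Fin n) (Fin n) ℂ, U * (Uᴴ * X) = X := fun X => by
    rw [← Matrix.mul_assoc, h₂, Matrix.one_mul]
  simp only [matComm, sub_mul, mul_sub, Matrix.mul_assoc, h₁, h₂, h₁', h₂', Matrix.mul_one]
  module

end Commutator

theorem two_sub_mul_eq_trace_add_trace_of_dmsa {n : ℕ} {μ : ℝ}
    {Λ T : Matrix (Fin n) (Fin n) ℂ}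
    (hΛ : Λ ∈ unitaryGroup (Fin n) ℂ) (hT : T ∈ unitaryGroup (Fin n) ℂ)
    (h : (2 * (μ : ℂ)) • Λ =
      matComm (matComm Λ Λᴴ) Λ + matComm (matComm Λ T) Tᴴ + matComm (matComm Λ Tᴴ) T) :
    (2 - μ) * n = (T * Λ * Tᴴ * Λᴴ).trace + (Tᴴ * Λ * T * Λᴴ).trace := by
  rw [add_assoc, matComm_matComm_add_matComm_matComm_of_mem_unitaryGroup hT,
    matComm_self_conjTranspose_of_mem_unitaryGroup hΛ] at h
  have htr := congrArg (fun X => (X * Λᴴ).trace) h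
  simp only [matComm, Matrix.zero_mul, Matrix.mul_zero, sub_zero, zero_add, Matrix.smul_mul,
    sub_mul, add_mul, mul_conjTranspose_self_of_mem_unitaryGroup hΛ, trace_smul, trace_sub,
    trace_add, trace_one, Fintype.card_fin, smul_eq_mul] at htr
  linear_combination (-1 / 2 : ℂ) * htr

theorem unitary_rep_spectrum_bounds_general (n : ℕ) (hn : 0 < n) (μ : ℝ)
    (Λ T : Matrix (Fin n) (Fin n) ℂ)
    (hΛ : Λ ∈ Matrix.unitaryGroup (Fin n) ℂ) (hT : T ∈ Matrix.unitaryGroup (Fin n) ℂ)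
    (h1 : (2 * (μ : ℂ)) • Λ =
      matComm (matComm Λ Λᴴ) Λ + matComm (matComm Λ T) Tᴴ + matComm (matComm Λ Tᴴ) T) :
    0 ≤ μ ∧ μ ≤ 4 := by
  have hTs : Tᴴ ∈ unitaryGroup (Fin n) ℂ := Unitary.star_mem hT
  have hΛs : Λᴴ ∈ unitaryGroup (Fin n) ℂ := Unitary.star_mem hΛ
  have hbound : |2 - μ| * n ≤ 2 * n := by
    have h := two_sub_mul_eq_trace_add_trace_of_dmsa hΛ hT h1
    have hnorm := congrArg norm h
    rw [norm_mul, Complex.norm_natCast, ← Complex.ofReal_ofNat, ← Complex.ofReal_sub,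
      Complex.norm_real, Real.norm_eq_abs] at hnorm
    calc |2 - μ| * n = _ := hnorm
      _ ≤ ‖(T * Λ * Tᴴ * Λᴴ).trace‖ + ‖(Tᴴ * Λ * T * Λᴴ).trace‖ := norm_add_le _ _
      _ ≤ n + n := by
        gcongr
        · simpa using norm_trace_le_card_of_mem_unitaryGroup
            (mul_mem (mul_mem (mul_mem hT hΛ) hTs) hΛs)
        · simpa using norm_trace_le_card_of_mem_unitaryGroup
            (mul_mem (mul_mem (mul_mem hTs hΛ) hT) hΛs)
      _ = 2 * n := by ring
  have habs : |2 - μ| ≤ 2 := le_of_mul_le_mul_right hbound (Nat.cast_pos.mpr hn)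
  constructor <;> linarith [abs_le.mp habs]

/-- If unitary `n×n` matrices `Λ`, `T` satisfy the DMSA equations with spectrum `{μ}`,
then `0 ≤ μ ≤ 4`; equivalently, for `μ < 0` or `μ > 4` there is no unitary
representation of `U₄(A)` with `Spec(A) = {μ}`. -/
theorem unitary_rep_spectrum_bounds (n : ℕ) (hn : 0 < n) (μ : ℝ)
    (Λ T : Matrix (Fin n) (Fin n) ℂ)
    (hΛ : Λ ∈ Matrix.unitaryGroup (Fin n) ℂ) (hT : T ∈ Matrix.unitaryGroup (Fin n) ℂ)
    (h1 : (2 * (μ : ℂ)) • Λ =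
      matComm (matComm Λ Λᴴ) Λ + matComm (matComm Λ T) Tᴴ + matComm (matComm Λ Tᴴ) T)
    (h2 : (2 * (μ : ℂ)) • T =
      matComm (matComm T Tᴴ) T + matComm (matComm T Λ) Λᴴ + matComm (matComm T Λᴴ) Λ) :
    0 ≤ μ ∧ μ ≤ 4 :=
  unitary_rep_spectrum_bounds_general n hn μ Λ T hΛ hT h1
end

section
/- Let n ≥ 1, let μ be a real number with μ ≠ 2, and let Λ, T be n×n unitary matrices satisfying the DMSA equations with spectrum {μ}. Assume the representation is irreducible, i.e., the only subspaces of ℂⁿ invariant under both Λ and T are 0 and ℂⁿ. Then there exist a complex number q with qⁿ = 1, real numbers θ, θ′, and an n×n unitary matrix U such that UΛU† = e^{iθ}·g_q and UTU† = e^{iθ′}·h_n, where g_q is the diagonal matrix with (g_q)_{kk} = q^{k−1} and h_n is the cyclic shift matrix with (h_n)_{k,k+1} = 1 for 1 ≤ k ≤ n−1, (h_n)_{n,1} = 1, and all other entries zero; moreover μ = |1−q|², i.e., μ = 4sin²β for some β ∈ ℝ with q = e^{2iβ} and e^{2inβ} = 1. -/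
open scoped Matrix BigOperators

/-- The clock matrix `g_q` with `(g_q)_{kk} = q^{k-1}` (indices `k = 1, …, n`). -/
noncomputable def clock (n : ℕ) (q : ℂ) : Matrix (Fin n) (Fin n) ℂ :=
  Matrix.diagonal fun k => q ^ (k : ℕ)

/-- The cyclic shift matrix `h_n` with `(h_n)_{k,k+1} = 1` for `1 ≤ k ≤ n−1`,
`(h_n)_{n,1} = 1`, and all other entries zero. -/
noncomputable def shift (n : ℕ) : Matrix (Fin n) (Fin n) ℂ :=
  Matrix.of fun k l => if (l : ℕ) = ((k : ℕ) + 1) % n then 1 else 0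

/-!
For unitary `Λ, T` the DMSA equations reduce to `ΛTΛ⋆ + Λ⋆TΛ = (2 - μ) T` and the same with
`Λ, T` exchanged. Multiplying by `T⋆` shows that `c - X` is unitary, where `X = ΛTΛ⋆T⋆` and
`c = 2 - μ ≠ 0`; expanding `(c - X)⋆(c - X) = 1` gives `X + X⋆ = c`, and from this `X` commutes
with `Λ` and `T`. By Schur's lemma `X = ω` is a scalar, i.e. `ΛT = ωTΛ` with `ω + ω̄ = 2 - μ`.
Determinants give `ωⁿ = 1`; irreducibility forces `ω` to have order exactly `n` (the span of
`v, Tv, …, T^{m-1}v` is invariant once `ω^m = 1`) and `Tⁿ` to be a scalar `γⁿ`.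
If `v` is a unit eigenvector of `Λ`, the vectors `(γT⋆)^k v` are eigenvectors of `Λ` with the
distinct eigenvalues `λω̄^k`, hence orthonormal, and `T` shifts them cyclically up to the factor
`γ`. In this basis `Λ = λ g_q` and `T = γ h_n` with `q = ω̄`, and `μ = 2 - 2 Re q = |1 - q|²`.
-/

section StarAlgebra

variable {R : Type*}

theorem Unitary.mul_star_self_mul_of_mem [Monoid R] [StarMul R] {u : R}
    (hu : u ∈ unitary R) (x : R) : u * (star u * x) = x := by
  rw [← mul_assoc, Unitary.mul_star_self_of_mem hu, one_mul]

theorem Unitary.star_mul_self_mul_of_mem [Monoid R] [StarMul R] {u : R}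
    (hu : u ∈ unitary R) (x : R) : star u * (u * x) = x := by
  rw [← mul_assoc, Unitary.star_mul_self_of_mem hu, one_mul]

variable [Ring R] [StarRing R] [Algebra ℂ R] {a b : R}

theorem conj_add_conj_star_of_dmsa (ha : a ∈ unitary R) (hb : b ∈ unitary R) (μ : ℝ)
    (h : (2 * (μ : ℂ)) • b = ⁅⁅b, star b⁆, b⁆ + ⁅⁅b, a⁆, star a⁆ + ⁅⁅b, star a⁆, a⁆) :
    a * b * star a + star a * b * a = ((2 - μ : ℝ) : ℂ) • b := by
  simp only [Ring.lie_def, sub_mul, mul_sub, mul_assoc, Unitary.star_mul_self_of_mem,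
    Unitary.mul_star_self_of_mem, Unitary.mul_star_self_mul_of_mem,
    Unitary.star_mul_self_mul_of_mem, ha, hb, mul_one, one_mul] at h ⊢
  push_cast
  linear_combination (norm := module) (1 / 2 : ℂ) • h

theorem commute_commutator_of_conj_add_conj_star [StarModule ℂ R] (ha : a ∈ unitary R)
    (hb : b ∈ unitary R) {c : ℝ} (hc : c ≠ 0) (hab : a * b * star a + star a * b * a = (c : ℂ) • b)
    (hba : b * a * star b + star b * a * b = (c : ℂ) • a) :
    a * b * star a * star b + star (a * b * star a * star b) = (c : ℂ) • 1 ∧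
      Commute (a * b * star a * star b) a ∧ Commute (a * b * star a * star b) b := by
  have hx : a * b * star a * star b ∈ unitary R :=
    mul_mem (mul_mem (mul_mem ha hb) (Unitary.star_mem ha)) (Unitary.star_mem hb)
  have hy : star a * b * a * star b ∈ unitary R :=
    mul_mem (mul_mem (mul_mem (Unitary.star_mem ha) hb) ha) (Unitary.star_mem hb)
  set x := a * b * star a * star b with hx_def
  have hxy : x + star a * b * a * star b = (c : ℂ) • 1 := by
    have := congrArg (· * star b) hab
    simpa only [add_mul, smul_mul_assoc, Unitary.mul_star_self_of_mem hb] using this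
  have hxz : star x + star b * a * b * star a = (c : ℂ) • 1 := by
    have := congrArg (· * star a) hba
    simpa only [hx_def, star_mul, star_star, mul_assoc, add_mul, smul_mul_assoc,
      Unitary.mul_star_self_of_mem ha] using this
  -- `c - x` is unitary, and `c ≠ 0` is real.
  have hsum : x + star x = (c : ℂ) • 1 := by
    have hunit := Unitary.star_mul_self_of_mem hy
    rw [eq_sub_of_add_eq' hxy] at hunit
    simp only [star_sub, star_smul, star_one, Complex.star_def, Complex.conj_ofReal, sub_mul,
      mul_sub, smul_mul_assoc, mul_smul_comm, one_mul, mul_one,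
      Unitary.star_mul_self_of_mem hx] at hunit
    have : (c : ℂ) • (x + star x) = (c : ℂ) • ((c : ℂ) • 1) := by
      linear_combination (norm := module) -hunit
    exact smul_right_injective R (by exact_mod_cast hc) this
  have hy_eq : star a * b * a * star b = star x :=
    (eq_sub_of_add_eq' hxy).trans (eq_sub_of_add_eq' hsum).symm
  have hz_eq : star b * a * b * star a = x :=
    (eq_sub_of_add_eq' hxz).trans (eq_sub_of_add_eq hsum).symm
  refine ⟨hsum, ?_, ?_⟩
  · have := congrArg star hy_eq
    simp only [star_mul, star_star] at this
    calc x * a = a * (b * (star a * (star b * a))) := by simp only [hx_def, mul_assoc]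
      _ = a * x := by rw [this]
  · calc x * b = a * b * star a := by
          simp only [hx_def, mul_assoc, Unitary.star_mul_self_of_mem hb, mul_one]
      _ = b * x := by
          rw [← hz_eq]; simp only [mul_assoc, Unitary.mul_star_self_mul_of_mem hb]

theorem mul_eq_smul_mul_of_commutator_eq_smul_one (ha : a ∈ unitary R) (hb : b ∈ unitary R)
    {ω : ℂ} (h : a * b * star a * star b = ω • 1) : a * b = ω • (b * a) := by
  have := congrArg (· * (b * a)) h
  simpa only [mul_assoc, Unitary.star_mul_self_mul_of_mem hb,
    Unitary.star_mul_self_mul_of_mem ha, Unitary.star_mul_self_of_mem ha, mul_one,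
    smul_mul_assoc, one_mul] using this

theorem mul_star_eq_star_smul_star_mul [StarModule ℂ R] (ha : a ∈ unitary R)
    {ω : ℂ} (h : a * b = ω • (b * a)) : a * star b = star ω • (star b * a) := by
  have := congrArg (fun x => a * star x * a) h
  simpa only [star_mul, star_smul, mul_assoc, Unitary.mul_star_self_mul_of_mem ha,
    Unitary.star_mul_self_of_mem ha, mul_one, mul_smul_comm, smul_mul_assoc] using this

end StarAlgebra

section QCommute

variable {K R : Type*} [CommSemiring K] [Semiring R] [Algebra K R] {a b : R} {ω : K}

theorem mul_pow_eq_smul_pow_mul (h : a * b = ω • (b * a)) (k : ℕ) :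
    a * b ^ k = ω ^ k • (b ^ k * a) := by
  induction k with
  | zero => simp
  | succ k ih =>
    rw [pow_succ, ← mul_assoc, ih, smul_mul_assoc, mul_assoc, h, mul_smul_comm, smul_smul,
      ← mul_assoc, pow_succ, mul_comm (ω ^ k)]

theorem commute_pow_of_mul_eq_smul_mul (h : a * b = ω • (b * a)) {m : ℕ} (hω : ω ^ m = 1) :
    Commute (b ^ m) a := by
  have := mul_pow_eq_smul_pow_mul h m
  rw [hω, one_smul] at this
  exact this.symm

end QCommute

section IrreduciblePair

variable {K ι : Type*} [Field K] [Fintype ι] [DecidableEq ι]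

def IsIrreduciblePair (A B : Matrix ι ι K) : Prop :=
  ∀ W : Submodule K (ι → K), (∀ v ∈ W, A *ᵥ v ∈ W) → (∀ v ∈ W, B *ᵥ v ∈ W) → W = ⊥ ∨ W = ⊤

theorem IsIrreduciblePair.exists_eq_smul_one [IsAlgClosed K] [Nonempty ι]
    {A B M : Matrix ι ι K} (h : IsIrreduciblePair A B) (hA : Commute M A) (hB : Commute M B) :
    ∃ β : K, M = β • 1 := by
  obtain ⟨β, hβ⟩ := Module.End.exists_eigenvalue M.mulVecLin
  set E := Module.End.eigenspace M.mulVecLin β with hE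
  have hmaps : ∀ C : Matrix ι ι K, Commute M C → ∀ v ∈ E, C *ᵥ v ∈ E := by
    intro C hC v hv
    rw [Module.End.mem_eigenspace_iff] at hv ⊢
    simp only [Matrix.mulVecLin_apply] at hv ⊢
    rw [Matrix.mulVec_mulVec, hC.eq, ← Matrix.mulVec_mulVec, hv, Matrix.mulVec_smul]
  refine ⟨β, ?_⟩
  rcases h _ (hmaps A hA) (hmaps B hB) with hbot | htop
  · exact absurd hbot hβ
  · rw [hE, Module.End.eigenspace_def, LinearMap.ker_eq_top, sub_eq_zero] at htop
    apply Matrix.toLin'.injective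
    rw [Matrix.toLin'_apply', htop, map_smul, Matrix.toLin'_one]
    rfl

theorem IsIrreduciblePair.card_le {A B : Matrix ι ι K} (h : IsIrreduciblePair A B)
    {v : ι → K} (hv : v ≠ 0) {lam ω b : K} (hAv : A *ᵥ v = lam • v)
    (hAB : A * B = ω • (B * A)) {m : ℕ} (hm : 0 < m) (hBm : B ^ m = b • 1) :
    Fintype.card ι ≤ m := by
  set W := Submodule.span K (Set.range fun k : Fin m => B ^ (k : ℕ) *ᵥ v)
  have hvW : v ∈ W := Submodule.subset_span ⟨⟨0, hm⟩, by simp⟩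
  have hinv : ∀ C : Matrix ι ι K, (∀ k : Fin m, C *ᵥ (B ^ (k : ℕ) *ᵥ v) ∈ W) →
      ∀ w ∈ W, C *ᵥ w ∈ W := by
    intro C hC
    have : W ≤ W.comap C.mulVecLin := Submodule.span_le.mpr (Set.range_subset_iff.mpr hC)
    exact fun w hw => this hw
  have hAW : ∀ w ∈ W, A *ᵥ w ∈ W := hinv A fun k => by
    rw [Matrix.mulVec_mulVec, mul_pow_eq_smul_pow_mul hAB, Matrix.smul_mulVec,
      ← Matrix.mulVec_mulVec, hAv, Matrix.mulVec_smul]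
    exact W.smul_mem _ (W.smul_mem _ (Submodule.subset_span ⟨k, rfl⟩))
  have hBW : ∀ w ∈ W, B *ᵥ w ∈ W := hinv B fun k => by
    rw [Matrix.mulVec_mulVec, ← pow_succ']
    by_cases hk : (k : ℕ) + 1 < m
    · exact Submodule.subset_span ⟨⟨k + 1, hk⟩, rfl⟩
    · rw [show (k : ℕ) + 1 = m by omega, hBm, Matrix.smul_mulVec, Matrix.one_mulVec]
      exact W.smul_mem _ hvW
  rcases h W hAW hBW with hbot | htop
  · exact absurd ((Submodule.mem_bot K).mp (hbot ▸ hvW)) hv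
  · simpa using finrank_le_of_span_eq_top htop

theorem pow_card_eq_one_of_mul_eq_smul_mul {A B : Matrix ι ι K} (hA : IsUnit A.det)
    (hB : IsUnit B.det) {ω : K} (h : A * B = ω • (B * A)) : ω ^ Fintype.card ι = 1 := by
  have := congrArg Matrix.det h
  rw [Matrix.det_smul, Matrix.det_mul, Matrix.det_mul, mul_comm B.det] at this
  exact (mul_eq_right₀ (hA.mul hB).ne_zero).mp this.symm

theorem IsIrreduciblePair.orderOf_eq_card [IsAlgClosed K] [Nonempty ι] {A B : Matrix ι ι K}
    (h : IsIrreduciblePair A B) {ω : K} (hAB : A * B = ω • (B * A))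
    (hω : ω ^ Fintype.card ι = 1) : orderOf ω = Fintype.card ι := by
  obtain ⟨lam, hlam⟩ := Module.End.exists_eigenvalue A.mulVecLin
  obtain ⟨v, hv⟩ := hlam.exists_hasEigenvector
  refine (orderOf_eq_iff Fintype.card_pos).mpr ⟨hω, fun m hm hm0 hωm => ?_⟩
  obtain ⟨b, hb⟩ := h.exists_eq_smul_one (commute_pow_of_mul_eq_smul_mul hAB hωm)
    (Commute.self_pow B m).symm
  exact (h.card_le hv.2 hv.apply_eq_smul hAB hm0 hb).not_gt hm

end IrreduciblePair

section UnitaryBasis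

open scoped ComplexOrder

variable {ι : Type*} [Fintype ι]

theorem Matrix.star_mulVec_dotProduct_mulVec_of_mem_unitaryGroup [DecidableEq ι] {K : Type*}
    [CommRing K] [StarRing K] {U : Matrix ι ι K} (hU : U ∈ Matrix.unitaryGroup ι K) (x y : ι → K) :
    star (U *ᵥ x) ⬝ᵥ (U *ᵥ y) = star x ⬝ᵥ y := by
  rw [Matrix.star_mulVec, Matrix.dotProduct_mulVec, Matrix.vecMul_vecMul,
    ← Matrix.star_eq_conjTranspose, Unitary.star_mul_self_of_mem hU, Matrix.vecMul_one]

theorem star_mul_eq_one_of_mulVec_eq_smul [DecidableEq ι] {U : Matrix ι ι ℂ}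
    (hU : U ∈ Matrix.unitaryGroup ι ℂ) {x y : ι → ℂ} {a b : ℂ} (hx : U *ᵥ x = a • x)
    (hy : U *ᵥ y = b • y) (hxy : star x ⬝ᵥ y ≠ 0) : star a * b = 1 := by
  have := Matrix.star_mulVec_dotProduct_mulVec_of_mem_unitaryGroup hU x y
  rw [hx, hy, star_smul, smul_dotProduct, dotProduct_smul, smul_smul, smul_eq_mul] at this
  exact (mul_eq_right₀ hxy).mp this

theorem dotProduct_eq_zero_of_mulVec_eq_smul [DecidableEq ι] {U : Matrix ι ι ℂ}
    (hU : U ∈ Matrix.unitaryGroup ι ℂ) {x y : ι → ℂ} {a b : ℂ} (hx : U *ᵥ x = a • x)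
    (hy : U *ᵥ y = b • y) (hab : a ≠ b) : star x ⬝ᵥ y = 0 := by
  by_contra hxy
  have hx0 : star x ⬝ᵥ x ≠ 0 := by
    rw [ne_eq, dotProduct_star_self_eq_zero]
    rintro rfl
    simp at hxy
  have hab' := star_mul_eq_one_of_mulVec_eq_smul hU hx hy hxy
  have haa := star_mul_eq_one_of_mulVec_eq_smul hU hx hx hx0
  exact hab (mul_left_cancel₀ (left_ne_zero_of_mul_eq_one haa) (haa.trans hab'.symm))

theorem Matrix.exists_mulVec_eq_smul_of_dotProduct_star_self_eq_one [Nonempty ι]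
    (A : Matrix ι ι ℂ) : ∃ (lam : ℂ) (v : ι → ℂ), star v ⬝ᵥ v = 1 ∧ A *ᵥ v = lam • v := by
  obtain ⟨lam, hlam⟩ := Module.End.exists_eigenvalue A.mulVecLin
  obtain ⟨w, hw⟩ := hlam.exists_hasEigenvector
  obtain ⟨r, hr, hrw⟩ := RCLike.pos_iff_exists_ofReal.mp (dotProduct_star_self_pos_iff.mpr hw.2)
  have hAw : A *ᵥ w = lam • w := hw.apply_eq_smul
  refine ⟨lam, ((√r)⁻¹ : ℂ) • w, ?_, by rw [Matrix.mulVec_smul, hAw, smul_comm]⟩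
  rw [star_smul, smul_dotProduct, dotProduct_smul, ← hrw, smul_eq_mul, smul_eq_mul,
    Complex.star_def, map_inv₀, Complex.conj_ofReal, ← mul_assoc, ← mul_inv,
    ← Complex.ofReal_mul, Real.mul_self_sqrt hr.le]
  exact inv_mul_cancel₀ (by exact_mod_cast hr.ne')

theorem Matrix.of_star_mul_mul_conjTranspose_apply (f : ι → ι → ℂ) (A : Matrix ι ι ℂ)
    (k l : ι) :
    (Matrix.of (star f) * A * (Matrix.of (star f))ᴴ) k l = star (f k) ⬝ᵥ (A *ᵥ f l) := by
  simp only [Matrix.mul_apply, Matrix.conjTranspose_apply, Matrix.of_apply, Pi.star_apply,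
    star_star, dotProduct, Matrix.mulVec, Finset.mul_sum, Finset.sum_mul]
  rw [Finset.sum_comm]
  simp only [mul_assoc]

variable [DecidableEq ι] {f : ι → ι → ℂ}

theorem Matrix.of_star_mem_unitaryGroup
    (hf : ∀ k l, star (f k) ⬝ᵥ f l = if k = l then 1 else 0) :
    Matrix.of (star f) ∈ Matrix.unitaryGroup ι ℂ := by
  rw [Matrix.mem_unitaryGroup_iff, Matrix.star_eq_conjTranspose]
  ext k l
  have := Matrix.of_star_mul_mul_conjTranspose_apply f 1 k l
  rw [mul_one, Matrix.one_mulVec, hf] at this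
  rw [this, Matrix.one_apply]

theorem Matrix.of_star_mul_mul_conjTranspose_eq_diagonal
    (hf : ∀ k l, star (f k) ⬝ᵥ f l = if k = l then 1 else 0) {A : Matrix ι ι ℂ} {d : ι → ℂ}
    (hA : ∀ l, A *ᵥ f l = d l • f l) :
    Matrix.of (star f) * A * (Matrix.of (star f))ᴴ = Matrix.diagonal d := by
  ext k l
  rw [Matrix.of_star_mul_mul_conjTranspose_apply, hA, dotProduct_smul, hf, Matrix.diagonal_apply]
  split_ifs with h <;> simp [h]

end UnitaryBasis

theorem shift_apply {n : ℕ} [NeZero n] (k l : Fin n) :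
    shift n k l = if l = k + 1 then 1 else 0 := by
  simp [shift, Fin.ext_iff, Fin.val_add]

theorem Matrix.of_star_mul_mul_conjTranspose_eq_smul_shift {n : ℕ} [NeZero n]
    {f : Fin n → Fin n → ℂ} (hf : ∀ k l, star (f k) ⬝ᵥ f l = if k = l then 1 else 0)
    {A : Matrix (Fin n) (Fin n) ℂ} {γ : ℂ} (hA : ∀ k, A *ᵥ f (k + 1) = γ • f k) :
    Matrix.of (star f) * A * (Matrix.of (star f))ᴴ = γ • shift n := by
  ext k l
  obtain ⟨m, rfl⟩ : ∃ m, l = m + 1 := ⟨l - 1, by simp⟩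
  rw [Matrix.of_star_mul_mul_conjTranspose_apply, hA, dotProduct_smul, hf, Matrix.smul_apply,
    shift_apply]
  simp [eq_comm]

theorem exists_unitary_conj_eq_smul_clock_smul_shift {n : ℕ} [NeZero n]
    {Λ T P : Matrix (Fin n) (Fin n) ℂ} (hΛ : Λ ∈ Matrix.unitaryGroup (Fin n) ℂ)
    (hP : P ∈ Matrix.unitaryGroup (Fin n) ℂ) (hPn : P ^ n = 1) {q γ lam : ℂ}
    (hq : orderOf q = n) (hΛP : Λ * P = q • (P * Λ)) (hTP : T * P = γ • 1)
    {v : Fin n → ℂ} (hv : star v ⬝ᵥ v = 1) (hΛv : Λ *ᵥ v = lam • v) :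
    ∃ U ∈ Matrix.unitaryGroup (Fin n) ℂ,
      U * Λ * Uᴴ = lam • clock n q ∧ U * T * Uᴴ = γ • shift n := by
  set f : Fin n → Fin n → ℂ := fun k => P ^ (k : ℕ) *ᵥ v
  have hΛf : ∀ k, Λ *ᵥ f k = (lam * q ^ (k : ℕ)) • f k := fun k => by
    rw [Matrix.mulVec_mulVec, mul_pow_eq_smul_pow_mul hΛP, Matrix.smul_mulVec,
      ← Matrix.mulVec_mulVec, hΛv, Matrix.mulVec_smul, smul_smul, mul_comm]
  have hTf : ∀ k : Fin n, T *ᵥ f (k + 1) = γ • f k := fun k => by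
    have hpow : P ^ ((k + 1 : Fin n) : ℕ) = P * P ^ (k : ℕ) := by
      rw [Fin.val_add, Fin.val_one', Nat.add_mod_mod, ← pow_eq_pow_mod _ hPn, pow_succ']
    simp only [f, hpow, Matrix.mulVec_mulVec, ← mul_assoc, hTP, smul_mul_assoc, one_mul,
      Matrix.smul_mulVec]
  have hlam : lam ≠ 0 := right_ne_zero_of_mul_eq_one
    (star_mul_eq_one_of_mulVec_eq_smul hΛ hΛv hΛv (hv ▸ one_ne_zero))
  have hf : ∀ k l, star (f k) ⬝ᵥ f l = if k = l then 1 else 0 := by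
    intro k l
    split_ifs with hkl
    · rw [hkl, Matrix.star_mulVec_dotProduct_mulVec_of_mem_unitaryGroup (pow_mem hP _), hv]
    · refine dotProduct_eq_zero_of_mulVec_eq_smul hΛ (hΛf k) (hΛf l) fun h => hkl ?_
      have hk : (k : ℕ) < orderOf q := hq ▸ k.isLt
      have hl : (l : ℕ) < orderOf q := hq ▸ l.isLt
      exact Fin.ext (pow_injOn_Iio_orderOf hk hl (mul_left_cancel₀ hlam h))
  refine ⟨Matrix.of (star f), Matrix.of_star_mem_unitaryGroup hf, ?_,
    Matrix.of_star_mul_mul_conjTranspose_eq_smul_shift hf hTf⟩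
  rw [Matrix.of_star_mul_mul_conjTranspose_eq_diagonal hf hΛf, clock, ← Matrix.diagonal_smul]
  rfl

theorem exists_mul_eq_smul_mul_of_dmsa {n : ℕ} [NeZero n] {Λ T : Matrix (Fin n) (Fin n) ℂ}
    (hΛ : Λ ∈ Matrix.unitaryGroup (Fin n) ℂ) (hT : T ∈ Matrix.unitaryGroup (Fin n) ℂ)
    {μ : ℝ} (hμ : μ ≠ 2)
    (h1 : (2 * (μ : ℂ)) • Λ =
      matComm (matComm Λ Λᴴ) Λ + matComm (matComm Λ T) Tᴴ + matComm (matComm Λ Tᴴ) T)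
    (h2 : (2 * (μ : ℂ)) • T =
      matComm (matComm T Tᴴ) T + matComm (matComm T Λ) Λᴴ + matComm (matComm T Λᴴ) Λ)
    (hirr : IsIrreduciblePair Λ T) :
    ∃ ω : ℂ, Λ * T = ω • (T * Λ) ∧ ω + star ω = 2 - μ := by
  obtain ⟨hsum, hcΛ, hcT⟩ := commute_commutator_of_conj_add_conj_star hΛ hT
    (sub_ne_zero.mpr hμ.symm) (conj_add_conj_star_of_dmsa hΛ hT μ h2)
    (conj_add_conj_star_of_dmsa hT hΛ μ h1)
  obtain ⟨ω, hω⟩ := hirr.exists_eq_smul_one hcΛ hcT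
  refine ⟨ω, mul_eq_smul_mul_of_commutator_eq_smul_one hΛ hT hω, ?_⟩
  rw [hω, star_smul, star_one, ← add_smul] at hsum
  exact_mod_cast smul_left_injective ℂ one_ne_zero hsum

theorem exists_mem_unitary_smul_star_pow_eq_one {ι : Type*} [Fintype ι] [DecidableEq ι]
    [Nonempty ι] {T : Matrix ι ι ℂ} (hT : T ∈ Matrix.unitaryGroup ι ℂ) {m : ℕ} (hm : 0 < m)
    {β : ℂ} (hTm : T ^ m = β • 1) : ∃ γ ∈ unitary ℂ, (γ • star T) ^ m = 1 := by
  have hβ : star β * β = 1 := by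
    have := Unitary.star_mul_self_of_mem (pow_mem hT m)
    rw [hTm, star_smul, star_one, smul_mul_smul, one_mul] at this
    exact smul_left_injective ℂ one_ne_zero (this.trans (one_smul ℂ 1).symm)
  obtain ⟨γ, hγ⟩ := IsAlgClosed.exists_pow_nat_eq β hm
  have hγ_norm : ‖γ‖ = 1 := by
    refine (pow_eq_one_iff_of_nonneg (norm_nonneg γ) hm.ne').mp ?_
    rw [← norm_pow, hγ, CStarRing.norm_of_mem_unitary (Unitary.mem_iff_star_mul_self.mpr hβ)]
  refine ⟨γ, Unitary.mem_iff_star_mul_self.mpr ?_, ?_⟩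
  · rw [Complex.star_def, Complex.conj_mul', hγ_norm]
    norm_num
  rw [smul_pow, ← star_pow, hTm, hγ, star_smul, star_one, smul_smul, mul_comm, hβ, one_smul]

theorem eq_norm_one_sub_sq_and_exists_half_angle {q : ℂ} {n : ℕ} (hn : n ≠ 0) (hq : q ^ n = 1)
    {μ : ℝ} (hμ : q + star q = 2 - μ) :
    μ = ‖1 - q‖ ^ 2 ∧ ∃ β : ℝ, μ = 4 * Real.sin β ^ 2 ∧
      q = Complex.exp (2 * (β : ℂ) * Complex.I) ∧
      Complex.exp (2 * (n : ℂ) * (β : ℂ) * Complex.I) = 1 := by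
  obtain ⟨φ, rfl⟩ := (Complex.norm_eq_one_iff q).mp (Complex.norm_eq_one_of_pow_eq_one hq hn)
  have hre : 2 - μ = 2 * Real.cos φ := by
    have := congrArg Complex.re hμ
    simpa [Complex.star_def, Complex.add_conj, Complex.exp_ofReal_mul_I_re,
      ← Complex.ofReal_cos] using this.symm
  refine ⟨?_, φ / 2, ?_, ?_, ?_⟩
  · rw [Complex.sq_norm, Complex.normSq_apply]
    simp only [Complex.sub_re, Complex.one_re, Complex.exp_ofReal_mul_I_re, Complex.sub_im,
      Complex.one_im, Complex.exp_ofReal_mul_I_im, zero_sub, mul_neg, neg_mul, neg_neg]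
    nlinarith [Real.sin_sq_add_cos_sq φ]
  · have := Real.cos_two_mul_eq_one_sub (φ / 2)
    rw [mul_div_cancel₀ _ two_ne_zero] at this
    linarith
  · congr 1; push_cast; ring
  · rw [← hq, ← Complex.exp_nat_mul]; congr 1; push_cast; ring

theorem exists_unitary_conj_eq_clock_shift {n : ℕ} [NeZero n] {Λ T : Matrix (Fin n) (Fin n) ℂ}
    (hΛ : Λ ∈ Matrix.unitaryGroup (Fin n) ℂ) (hT : T ∈ Matrix.unitaryGroup (Fin n) ℂ) {ω : ℂ}
    (hΛT : Λ * T = ω • (T * Λ)) (hω : orderOf ω = n) {β : ℂ} (hTn : T ^ n = β • 1) :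
    ∃ (θ θ' : ℝ) (U : Matrix (Fin n) (Fin n) ℂ), U ∈ Matrix.unitaryGroup (Fin n) ℂ ∧
      U * Λ * Uᴴ = Complex.exp (Complex.I * θ) • clock n (star ω) ∧
      U * T * Uᴴ = Complex.exp (Complex.I * θ') • shift n := by
  obtain ⟨γ, hγ, hPn⟩ := exists_mem_unitary_smul_star_pow_eq_one hT (Nat.pos_of_neZero n) hTn
  obtain ⟨lam, v, hv, hΛv⟩ := Λ.exists_mulVec_eq_smul_of_dotProduct_star_self_eq_one
  have hΛP : Λ * (γ • star T) = star ω • (γ • star T * Λ) := by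
    rw [mul_smul_comm, mul_star_eq_star_smul_star_mul hΛ hΛT, smul_mul_assoc, smul_comm]
  have hTP : T * (γ • star T) = γ • 1 := by
    rw [mul_smul_comm, Unitary.mul_star_self_of_mem hT]
  have hq : orderOf (star ω) = n :=
    (orderOf_injective (starRingEnd ℂ).toMonoidHom (RingHom.injective _) ω).trans hω
  obtain ⟨U, hU, hUΛ, hUT⟩ := exists_unitary_conj_eq_smul_clock_smul_shift hΛ
    (Unitary.smul_mem_of_mem hγ (Unitary.star_mem hT)) hPn hq hΛP hTP hv hΛv
  have hlam : lam ∈ unitary ℂ := Unitary.mem_iff_star_mul_self.mpr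
    (star_mul_eq_one_of_mulVec_eq_smul hΛ hΛv hΛv (hv ▸ one_ne_zero))
  obtain ⟨θ, rfl⟩ := (Complex.norm_eq_one_iff lam).mp (CStarRing.norm_of_mem_unitary hlam)
  obtain ⟨θ', rfl⟩ := (Complex.norm_eq_one_iff γ).mp (CStarRing.norm_of_mem_unitary hγ)
  exact ⟨θ, θ', U, hU, by rwa [mul_comm], by rwa [mul_comm]⟩

/-- Every irreducible unitary representation of `U₄(A)` with `Spec(A) = {μ}`, `μ ≠ 2`,
is (up to unitary equivalence and phases) the fuzzy torus representation:
`UΛU† = e^{iθ} g_q`, `UTU† = e^{iθ′} h_n` with `qⁿ = 1`; moreover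
`μ = |1−q|² = 4 sin² β` with `q = e^{2iβ}` and `e^{2inβ} = 1`. -/
theorem irreducible_unitary_rep_is_fuzzy_torus (n : ℕ) (hn : 0 < n)
    (μ : ℝ) (hμ : μ ≠ 2)
    (Λ T : Matrix (Fin n) (Fin n) ℂ)
    (hΛ : Λ ∈ Matrix.unitaryGroup (Fin n) ℂ) (hT : T ∈ Matrix.unitaryGroup (Fin n) ℂ)
    (h1 : (2 * (μ : ℂ)) • Λ =
      matComm (matComm Λ Λᴴ) Λ + matComm (matComm Λ T) Tᴴ + matComm (matComm Λ Tᴴ) T)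
    (h2 : (2 * (μ : ℂ)) • T =
      matComm (matComm T Tᴴ) T + matComm (matComm T Λ) Λᴴ + matComm (matComm T Λᴴ) Λ)
    (hirr : ∀ W : Submodule ℂ (Fin n → ℂ),
      (∀ v ∈ W, Λ.mulVec v ∈ W) → (∀ v ∈ W, T.mulVec v ∈ W) → W = ⊥ ∨ W = ⊤) :
    ∃ q : ℂ, q ^ n = 1 ∧
      (∃ (θ θ' : ℝ) (U : Matrix (Fin n) (Fin n) ℂ), U ∈ Matrix.unitaryGroup (Fin n) ℂ ∧
        U * Λ * Uᴴ = Complex.exp (Complex.I * (θ : ℂ)) • clock n q ∧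
        U * T * Uᴴ = Complex.exp (Complex.I * (θ' : ℂ)) • shift n) ∧
      μ = ‖1 - q‖ ^ 2 ∧
      (∃ β : ℝ, μ = 4 * Real.sin β ^ 2 ∧ q = Complex.exp (2 * (β : ℂ) * Complex.I) ∧
        Complex.exp (2 * (n : ℂ) * (β : ℂ) * Complex.I) = 1) := by
  have : NeZero n := ⟨hn.ne'⟩
  have hirr' : IsIrreduciblePair Λ T := hirr
  obtain ⟨ω, hΛT, hω⟩ := exists_mul_eq_smul_mul_of_dmsa hΛ hT hμ h1 h2 hirr'
  have hωn : ω ^ n = 1 := by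
    simpa using pow_card_eq_one_of_mul_eq_smul_mul (Matrix.UnitaryGroup.det_isUnit ⟨Λ, hΛ⟩)
      (Matrix.UnitaryGroup.det_isUnit ⟨T, hT⟩) hΛT
  have hord : orderOf ω = n := by simpa using hirr'.orderOf_eq_card hΛT (by simpa using hωn)
  obtain ⟨β, hβ⟩ := hirr'.exists_eq_smul_one (commute_pow_of_mul_eq_smul_mul hΛT hωn)
    (Commute.self_pow T n).symm
  refine ⟨star ω, by rw [← star_pow, hωn, star_one],
    exists_unitary_conj_eq_clock_shift hΛ hT hΛT hord hβ,
    eq_norm_one_sub_sq_and_exists_half_angle hn.ne' (by rw [← star_pow, hωn, star_one])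
      (by rwa [star_star, add_comm])⟩
end

section
/- Let n ≥ 1 and let Λ, T be n×n unitary matrices satisfying the DMSA equations with spectrum {2}, i.e., 4Λ = [[Λ,Λ†],Λ] + [[Λ,T],T†] + [[Λ,T†],T] and 4T = [[T,T†],T] + [[T,Λ],Λ†] + [[T,Λ†],Λ]. If the representation is irreducible, i.e., the only subspaces of ℂⁿ invariant under both Λ and T are 0 and ℂⁿ, then n = 4. -/
open scoped Matrix BigOperators

/-!
For unitary `Λ`, `T` the term `[[Λ,Λ†],Λ]` vanishes and the remaining terms expand to
`4Λ - 2(TΛT† + T†ΛT)`, so at `μ = 2` the equations say exactly that `T²` anticommutes with `Λ`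
and `Λ²` anticommutes with `T`. Taking determinants of `Λ²T = -TΛ²` shows that `n` is even.
For `n = 2`, `T` has trace zero (it is conjugate to `-T`), so Cayley–Hamilton makes `T²` a
scalar, which cannot anticommute with the invertible `Λ`. Finally `ΛT`, `TΛ` and `Λ⁴` commute
pairwise; for a common eigenvector `v`, the span of `v, Λv, Λ²v, Λ³v` is invariant under `Λ` and
`T`, hence everything by irreducibility, and `n ≤ 4`.
-/

open Matrix Module Set Submodule

section AntiCommuting

variable {R : Type*} [Ring R] {a t : R}

theorem commute_sq_of_mul_eq_neg_mul (h : a * t = -(t * a)) : Commute a (t ^ 2) := by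
  rw [Commute, SemiconjBy, sq, ← mul_assoc, h, neg_mul, mul_assoc, h, mul_neg, neg_neg, mul_assoc]

theorem commute_mul_mul_swap_of_sq_mul_eq_neg (hat : a ^ 2 * t = -(t * a ^ 2))
    (hta : t ^ 2 * a = -(a * t ^ 2)) : Commute (a * t) (t * a) :=
  calc a * t * (t * a) = -(a ^ 2 * t ^ 2) := by linear_combination (norm := noncomm_ring) a * hta
    _ = -(t ^ 2 * a ^ 2) := by rw [(commute_sq_of_mul_eq_neg_mul hat).eq]
    _ = t * a * (a * t) := by linear_combination (norm := noncomm_ring) -(t * hat)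

end AntiCommuting

namespace Module.End

variable {K V : Type*} [Field K] [IsAlgClosed K] [AddCommGroup V] [Module K V]
  [FiniteDimensional K V]

theorem exists_hasEigenvector_mem {f : End K V} {p : Submodule K V} (hp : p ≠ ⊥)
    (hfp : MapsTo f p p) : ∃ μ, ∃ v ∈ p, f.HasEigenvector μ v := by
  have : Nontrivial p := nontrivial_iff_ne_bot.mpr hp
  obtain ⟨μ, hμ⟩ := exists_eigenvalue (f.restrict hfp)
  obtain ⟨w, hw⟩ := hμ.exists_hasEigenvector
  refine ⟨μ, w, w.2, mem_eigenspace_iff.mpr ?_, by simpa using hw.2⟩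
  exact congrArg Subtype.val hw.apply_eq_smul

theorem exists_hasEigenvector_mem_of_commute {f g : End K V} (hfg : Commute f g)
    {p : Submodule K V} (hp : p ≠ ⊥) (hfp : MapsTo f p p) (hgp : MapsTo g p p) :
    ∃ μ ν, ∃ v ∈ p, f.HasEigenvector μ v ∧ g.HasEigenvector ν v := by
  obtain ⟨μ, w, hwp, hw⟩ := exists_hasEigenvector_mem hp hfp
  have hq : p ⊓ f.eigenspace μ ≠ ⊥ := (Submodule.ne_bot_iff _).mpr ⟨w, ⟨hwp, hw.1⟩, hw.2⟩
  have hgq : MapsTo g ↑(p ⊓ f.eigenspace μ) ↑(p ⊓ f.eigenspace μ) := fun x hx =>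
    ⟨hgp hx.1, mapsTo_genEigenspace_of_comm hfg μ 1 hx.2⟩
  obtain ⟨ν, v, hvq, hv⟩ := exists_hasEigenvector_mem hq hgq
  exact ⟨μ, ν, v, hvq.1, ⟨hvq.2, hv.2⟩, hv⟩

theorem exists_hasEigenvector_of_commute [Nontrivial V] {f g h : End K V} (hfg : Commute f g)
    (hfh : Commute f h) (hgh : Commute g h) :
    ∃ μ ν κ v, f.HasEigenvector μ v ∧ g.HasEigenvector ν v ∧ h.HasEigenvector κ v := by
  obtain ⟨μ, hμ⟩ := exists_eigenvalue f
  obtain ⟨ν, κ, v, hv, hgv, hhv⟩ := exists_hasEigenvector_mem_of_commute hgh hμ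
    (mapsTo_genEigenspace_of_comm hfg μ 1) (mapsTo_genEigenspace_of_comm hfh μ 1)
  exact ⟨μ, ν, κ, v, ⟨hv, hgv.2⟩, hgv, hhv⟩

end Module.End

namespace Matrix

variable {K ι : Type*} [Field K] [Fintype ι]

theorem exists_mulVec_eq_smul_of_commute [DecidableEq ι] [IsAlgClosed K] [Nonempty ι]
    {A B C : Matrix ι ι K} (hAB : Commute A B) (hAC : Commute A C) (hBC : Commute B C) :
    ∃ v ≠ 0, (∃ μ : K, A *ᵥ v = μ • v) ∧ (∃ ν : K, B *ᵥ v = ν • v) ∧ ∃ κ : K, C *ᵥ v = κ • v := by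
  have hcomm {X Y : Matrix ι ι K} (h : Commute X Y) : Commute (toLin' X) (toLin' Y) :=
    h.map toLinAlgEquiv'
  obtain ⟨μ, ν, κ, v, hA, hB, hC⟩ :=
    End.exists_hasEigenvector_of_commute (hcomm hAB) (hcomm hAC) (hcomm hBC)
  refine ⟨v, hA.2, ⟨μ, ?_⟩, ⟨ν, ?_⟩, ⟨κ, ?_⟩⟩ <;> rw [← toLin'_apply]
  exacts [hA.apply_eq_smul, hB.apply_eq_smul, hC.apply_eq_smul]

theorem mulVec_mem_span_of_forall {M : Matrix ι ι K} {s : Set (ι → K)}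
    (h : ∀ x ∈ s, M *ᵥ x ∈ span K s) : ∀ x ∈ span K s, M *ᵥ x ∈ span K s :=
  fun _ hx => span_le (p := (span K s).comap M.mulVecLin) |>.mpr h hx

theorem mem_of_mulVec_mem [DecidableEq ι] {M : Matrix ι ι K} (hM : IsUnit M)
    {W : Submodule K (ι → K)} (hW : ∀ x ∈ W, M *ᵥ x ∈ W) {x : ι → K} (hx : M *ᵥ x ∈ W) : x ∈ W := by
  have hinj : Function.Injective M.mulVec := mulVec_injective_iff_isUnit.mpr hM
  have hrestrict : Function.Injective (M.mulVecLin.restrict hW) := fun y z hyz =>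
    Subtype.ext (hinj (congrArg Subtype.val hyz))
  obtain ⟨w, hw⟩ := LinearMap.injective_iff_surjective.mp hrestrict ⟨M *ᵥ x, hx⟩
  exact hinj (congrArg Subtype.val hw) ▸ w.2

theorem mulVec_mem_span_range_pow [DecidableEq ι] {M : Matrix ι ι K} {v : ι → K} {k : ℕ}
    (hk : M ^ k *ᵥ v ∈ span K (range fun i : Fin k => M ^ (i : ℕ) *ᵥ v)) :
    ∀ x ∈ span K (range fun i : Fin k => M ^ (i : ℕ) *ᵥ v),
      M *ᵥ x ∈ span K (range fun i : Fin k => M ^ (i : ℕ) *ᵥ v) := by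
  refine mulVec_mem_span_of_forall ?_
  rintro _ ⟨i, rfl⟩
  rw [mulVec_mulVec, ← pow_succ']
  obtain h | h : (i : ℕ) + 1 < k ∨ (i : ℕ) + 1 = k := by lia
  · exact subset_span ⟨⟨i + 1, h⟩, rfl⟩
  · rwa [h]

theorem card_le_four_of_sq_mul_eq_neg [DecidableEq ι] [IsAlgClosed K] [Nonempty ι]
    {a t : Matrix ι ι K} (ha : IsUnit a)
    (hat : a ^ 2 * t = -(t * a ^ 2)) (hta : t ^ 2 * a = -(a * t ^ 2))
    (hirr : ∀ W : Submodule K (ι → K),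
      (∀ v ∈ W, a *ᵥ v ∈ W) → (∀ v ∈ W, t *ᵥ v ∈ W) → W = ⊥ ∨ W = ⊤) :
    Fintype.card ι ≤ 4 := by
  have ha4 : Commute (a ^ 4) t := by
    simpa only [← pow_mul] using (commute_sq_of_mul_eq_neg_mul (neg_eq_iff_eq_neg.mp hat.symm)).symm
  have haa4 : Commute a (a ^ 4) := (Commute.refl a).pow_right 4
  obtain ⟨v, hv0, ⟨μ, hμ⟩, ⟨ν, hν⟩, ⟨α, hα⟩⟩ := exists_mulVec_eq_smul_of_commute
    (commute_mul_mul_swap_of_sq_mul_eq_neg hat hta) (haa4.mul_left ha4.symm)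
    (ha4.symm.mul_left haa4)
  set W := span K (range fun i : Fin 4 => a ^ (i : ℕ) *ᵥ v)
  have hvW : v ∈ W := subset_span ⟨0, by simp⟩
  have haW : ∀ x ∈ W, a *ᵥ x ∈ W := mulVec_mem_span_range_pow (hα ▸ W.smul_mem α hvW)
  have ha2W : ∀ x ∈ W, a ^ 2 *ᵥ x ∈ W := fun x hx => by
    simpa [sq, ← mulVec_mulVec] using haW _ (haW x hx)
  have hta2 (y : ι → K) : t *ᵥ (a ^ 2 *ᵥ y) = -(a ^ 2 *ᵥ (t *ᵥ y)) := by
    rw [mulVec_mulVec, mulVec_mulVec, ← neg_mulVec, hat, neg_neg]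
  have htv : t *ᵥ v ∈ W :=
    mem_of_mulVec_mem ha haW (by rw [mulVec_mulVec, hμ]; exact W.smul_mem μ hvW)
  have htav : t *ᵥ (a *ᵥ v) ∈ W := by rw [mulVec_mulVec, hν]; exact W.smul_mem ν hvW
  have htW : ∀ x ∈ W, t *ᵥ x ∈ W := by
    refine mulVec_mem_span_of_forall ?_
    rintro _ ⟨i, rfl⟩
    fin_cases i
    · simpa using htv
    · simpa using htav
    · change t *ᵥ (a ^ 2 *ᵥ v) ∈ W
      rw [hta2]
      exact neg_mem (ha2W _ htv)
    · change t *ᵥ (a ^ 3 *ᵥ v) ∈ W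
      rw [pow_succ, ← mulVec_mulVec, hta2]
      exact neg_mem (ha2W _ htav)
  have hWtop : W = ⊤ := (hirr W haW htW).resolve_left fun h => hv0 (by simpa [h] using hvW)
  calc Fintype.card ι = finrank K W := by rw [hWtop, finrank_top, finrank_fintype_fun_eq_card]
    _ ≤ 4 := finrank_range_le_card _

theorem even_card_of_mul_eq_neg_mul [DecidableEq ι] (hK : (-1 : K) ≠ 1) {A B : Matrix ι ι K}
    (hA : IsUnit A) (hB : IsUnit B) (h : A * B = -(B * A)) : Even (Fintype.card ι) := by
  have hAB : A.det * B.det ≠ 0 := mul_ne_zero ((isUnit_iff_isUnit_det A).mp hA).ne_zero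
    ((isUnit_iff_isUnit_det B).mp hB).ne_zero
  have hdet := congrArg det h
  rw [det_neg, det_mul, det_mul, mul_comm B.det] at hdet
  exact (neg_one_pow_eq_one_iff_even hK).mp ((mul_eq_right₀ hAB).mp hdet.symm)

theorem trace_eq_zero_of_mul_eq_neg_mul [DecidableEq ι] (hK : (2 : K) ≠ 0) {A B : Matrix ι ι K}
    (hA : IsUnit A) (h : A * B = -(B * A)) : B.trace = 0 := by
  have hA' := (isUnit_iff_isUnit_det A).mp hA
  have hB : B.trace = -B.trace := calc
    B.trace = (A⁻¹ * (A * B)).trace := by rw [← mul_assoc, nonsing_inv_mul A hA', one_mul]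
    _ = -(B * A * A⁻¹).trace := by rw [h, mul_neg, trace_neg, trace_mul_comm]
    _ = -B.trace := by rw [mul_assoc, mul_nonsing_inv A hA', mul_one]
  exact (mul_eq_zero.mp (by linear_combination hB : (2 : K) * B.trace = 0)).resolve_left hK

theorem sq_fin_two_eq_trace_smul_sub_det_smul {R : Type*} [CommRing R]
    (A : Matrix (Fin 2) (Fin 2) R) : A ^ 2 = A.trace • A - A.det • 1 := by
  ext i j
  fin_cases i <;> fin_cases j <;> simp [sq, mul_apply, trace_fin_two, det_fin_two] <;> ring

theorem sq_mul_ne_neg_mul_sq_of_fin_two (hK : (2 : K) ≠ 0) {a t : Matrix (Fin 2) (Fin 2) K}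
    (ha : IsUnit a) (ht : IsUnit t) (hat : a ^ 2 * t = -(t * a ^ 2)) :
    t ^ 2 * a ≠ -(a * t ^ 2) := by
  intro hta
  have ht2 : t ^ 2 = -t.det • 1 := by
    rw [sq_fin_two_eq_trace_smul_sub_det_smul, trace_eq_zero_of_mul_eq_neg_mul hK (ha.pow 2) hat,
      zero_smul, zero_sub, neg_smul]
  rw [ht2] at hta
  have hta' : -(t.det • a) = t.det • a := by simpa using hta
  have h2a : ((2 : K) * t.det) • a = 0 := by linear_combination (norm := module) -hta'
  have htdet : t.det ≠ 0 := ((isUnit_iff_isUnit_det t).mp ht).ne_zero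
  exact ha.ne_zero ((smul_eq_zero.mp h2a).resolve_left (mul_ne_zero hK htdet))

end Matrix

theorem sq_mul_eq_neg_mul_sq_of_dmsa {n : ℕ} {Λ T : Matrix (Fin n) (Fin n) ℂ} (hΛ : IsStarNormal Λ)
    (hT : T ∈ unitaryGroup (Fin n) ℂ)
    (h : (4 : ℂ) • Λ =
      matComm (matComm Λ Λᴴ) Λ + matComm (matComm Λ T) Tᴴ + matComm (matComm Λ Tᴴ) T) :
    T ^ 2 * Λ = -(Λ * T ^ 2) := by
  have hT₁ : Tᴴ * T = 1 := mem_unitaryGroup_iff'.mp hT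
  have hT₂ : T * Tᴴ = 1 := mem_unitaryGroup_iff.mp hT
  have hΛΛ : matComm Λ Λᴴ = 0 := sub_eq_zero.mpr hΛ.star_comm_self.eq.symm
  rw [hΛΛ] at h
  unfold matComm at h
  have h2 : (2 : ℂ) • (T * Λ * Tᴴ + Tᴴ * Λ * T) = 0 := by
    linear_combination (norm := skip) h + Λ * hT₂ + hT₁ * Λ + Λ * hT₁ + hT₂ * Λ
    simp only [mul_sub, sub_mul, mul_assoc, zero_mul, mul_zero, mul_one, one_mul]
    module
  have hconj : T * Λ * Tᴴ + Tᴴ * Λ * T = 0 := (smul_eq_zero.mp h2).resolve_left two_ne_zero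
  linear_combination (norm := noncomm_ring) T * hconj * T - (T ^ 2 * Λ) * hT₁ - hT₂ * (Λ * T ^ 2)

/-- Every irreducible unitary representation of `U₄(A)` with `Spec(A) = {2}` is
four-dimensional. -/
theorem irreducible_unitary_rep_mu_two_is_fourdim (n : ℕ) (hn : 0 < n)
    (Λ T : Matrix (Fin n) (Fin n) ℂ)
    (hΛ : Λ ∈ Matrix.unitaryGroup (Fin n) ℂ) (hT : T ∈ Matrix.unitaryGroup (Fin n) ℂ)
    (h1 : (4 : ℂ) • Λ =
      matComm (matComm Λ Λᴴ) Λ + matComm (matComm Λ T) Tᴴ + matComm (matComm Λ Tᴴ) T)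
    (h2 : (4 : ℂ) • T =
      matComm (matComm T Tᴴ) T + matComm (matComm T Λ) Λᴴ + matComm (matComm T Λᴴ) Λ)
    (hirr : ∀ W : Submodule ℂ (Fin n → ℂ),
      (∀ v ∈ W, Λ.mulVec v ∈ W) → (∀ v ∈ W, T.mulVec v ∈ W) → W = ⊥ ∨ W = ⊤) :
    n = 4 := by
  have hΛu : IsUnit Λ := Unitary.isUnit_coe (U := ⟨Λ, hΛ⟩)
  have hTu : IsUnit T := Unitary.isUnit_coe (U := ⟨T, hT⟩)
  have hTΛ := sq_mul_eq_neg_mul_sq_of_dmsa (isStarNormal_of_mem_unitary hΛ) hT h1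
  have hΛT := sq_mul_eq_neg_mul_sq_of_dmsa (isStarNormal_of_mem_unitary hT) hΛ h2
  have : Nonempty (Fin n) := ⟨⟨0, hn⟩⟩
  have hle : n ≤ 4 := by simpa using card_le_four_of_sq_mul_eq_neg hΛu hΛT hTΛ hirr
  have heven : Even n := by
    simpa using even_card_of_mul_eq_neg_mul (by norm_num) (hΛu.pow 2) hTu hΛT
  have hne : n ≠ 2 := by
    rintro rfl
    exact sq_mul_ne_neg_mul_sq_of_fin_two two_ne_zero hΛu hTu hΛT hTΛ
  obtain ⟨k, rfl⟩ := heven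
  lia
end

section
/- Let n ≥ 1, μ ∈ ℝ, and let Λ, T be n×n unitary matrices satisfying the DMSA equations with spectrum {μ}. Then the matrices ΛT and TΛ commute: [ΛT, TΛ] = 0. -/
open scoped Matrix BigOperators

theorem matComm_eq_lie {n : ℕ} (A B : Matrix (Fin n) (Fin n) ℂ) : matComm A B = ⁅A, B⁆ :=
  (Ring.lie_def A B).symm

section UnitaryRing

variable {R : Type*} [Ring R] [StarRing R] {u : R}

theorem lie_lie_star_self_of_mem_unitary (hu : u ∈ unitary R) : ⁅⁅u, star u⁆, u⁆ = 0 := by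
  rw [Ring.lie_def u, Unitary.mul_star_self_of_mem hu, Unitary.star_mul_self_of_mem hu, sub_self,
    Ring.lie_def, zero_mul, mul_zero, sub_self]

theorem lie_lie_add_lie_lie_star_of_mem_unitary (hu : u ∈ unitary R) (x : R) :
    ⁅⁅x, u⁆, star u⁆ + ⁅⁅x, star u⁆, u⁆ = 4 • x - 2 • (u * x * star u + star u * x * u) := by
  have h₁ := Unitary.mul_star_self_of_mem hu
  have h₂ := Unitary.star_mul_self_of_mem hu
  simp only [Ring.lie_def, sub_mul, mul_sub, mul_assoc, h₁, h₂, mul_one]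
  simp only [← mul_assoc, h₁, h₂, one_mul]
  noncomm_ring

theorem conj_add_conj_star_eq_smul_of_dmsa {𝕜 : Type*} [Field 𝕜] [CharZero 𝕜] [Algebra 𝕜 R]
    {x : R} (hx : x ∈ unitary R) (hu : u ∈ unitary R) {μ : 𝕜}
    (h : (2 * μ) • x = ⁅⁅x, star x⁆, x⁆ + ⁅⁅x, u⁆, star u⁆ + ⁅⁅x, star u⁆, u⁆) :
    u * x * star u + star u * x * u = (2 - μ) • x := by
  rw [add_assoc, lie_lie_star_self_of_mem_unitary hx, zero_add,
    lie_lie_add_lie_lie_star_of_mem_unitary hu] at h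
  linear_combination (norm := module) (2 : 𝕜)⁻¹ • h

theorem sq_mul_add_mul_sq_of_conj_add_conj_star {S : Type*} [CommSemiring S] [Algebra S R]
    {x : R} {c : S} (hu : u ∈ unitary R) (h : u * x * star u + star u * x * u = c • x) :
    u * u * x + x * u * u = c • (u * x * u) := by
  have := congrArg (fun y => u * y * u) h
  simp only [mul_add, add_mul, mul_assoc, Unitary.star_mul_self_of_mem hu, mul_one] at this
  simp only [← mul_assoc, Unitary.mul_star_self_of_mem hu, one_mul, mul_smul_comm,
    smul_mul_assoc] at this
  simpa only [mul_assoc] using this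

theorem commute_mul_mul_of_conj_add_conj_star {S : Type*} [CommSemiring S] [Algebra S R] {v : R}
    {c : S} (hu : u ∈ unitary R) (hv : v ∈ unitary R)
    (hvu : v * u * star v + star v * u * v = c • u)
    (huv : u * v * star u + star u * v * u = c • v) :
    Commute (u * v) (v * u) := by
  have h₁ := congrArg (· * v) (sq_mul_add_mul_sq_of_conj_add_conj_star hu huv)
  have h₂ := congrArg (u * ·) (sq_mul_add_mul_sq_of_conj_add_conj_star hv hvu)
  simp only [add_mul, mul_add, smul_mul_assoc, mul_smul_comm, mul_assoc] at h₁ h₂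
  show u * v * (v * u) = v * u * (u * v)
  simp only [mul_assoc]
  linear_combination (norm := noncomm_ring) h₂ - h₁

end UnitaryRing

theorem unitary_rep_LT_TL_commute_general (n : ℕ) (μ : ℝ)
    (Λ T : Matrix (Fin n) (Fin n) ℂ)
    (hΛ : Λ ∈ Matrix.unitaryGroup (Fin n) ℂ) (hT : T ∈ Matrix.unitaryGroup (Fin n) ℂ)
    (h1 : (2 * (μ : ℂ)) • Λ =
      matComm (matComm Λ Λᴴ) Λ + matComm (matComm Λ T) Tᴴ + matComm (matComm Λ Tᴴ) T)
    (h2 : (2 * (μ : ℂ)) • T =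
      matComm (matComm T Tᴴ) T + matComm (matComm T Λ) Λᴴ + matComm (matComm T Λᴴ) Λ) :
    matComm (Λ * T) (T * Λ) = 0 := by
  simp only [matComm_eq_lie, ← Matrix.star_eq_conjTranspose] at h1 h2 ⊢
  have hTΛ := conj_add_conj_star_eq_smul_of_dmsa hΛ hT h1
  have hΛT := conj_add_conj_star_eq_smul_of_dmsa hT hΛ h2
  rw [Ring.lie_def, sub_eq_zero]
  exact (commute_mul_mul_of_conj_add_conj_star hΛ hT hTΛ hΛT).eq

/-- For unitary matrices `Λ`, `T` satisfying the DMSA equations with spectrum `{μ}`,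
the matrices `ΛT` and `TΛ` commute. -/
theorem unitary_rep_LT_TL_commute (n : ℕ) (hn : 0 < n) (μ : ℝ)
    (Λ T : Matrix (Fin n) (Fin n) ℂ)
    (hΛ : Λ ∈ Matrix.unitaryGroup (Fin n) ℂ) (hT : T ∈ Matrix.unitaryGroup (Fin n) ℂ)
    (h1 : (2 * (μ : ℂ)) • Λ =
      matComm (matComm Λ Λᴴ) Λ + matComm (matComm Λ T) Tᴴ + matComm (matComm Λ Tᴴ) T)
    (h2 : (2 * (μ : ℂ)) • T =
      matComm (matComm T Tᴴ) T + matComm (matComm T Λ) Λᴴ + matComm (matComm T Λᴴ) Λ) :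
    matComm (Λ * T) (T * Λ) = 0 :=
  unitary_rep_LT_TL_commute_general n μ Λ T hΛ hT h1 h2
end

section
/- Let g be a nilpotent Lie algebra over a field and let x₁,…,x_d ∈ g. Then the linear endomorphism Δ_X : g → g, Δ_X(a) = ∑_{j=1}^d [[a, x_j], x_j], is nilpotent. Consequently, if Δ_X(x) = μ·x for some nonzero x ∈ g and scalar μ, then μ = 0; i.e., every DMSA (g, X) with g nilpotent has Spec(A) = {0}. -/
/-!
`Δ_X = ∑ⱼ (ad xⱼ)²`, and each `ad xⱼ` pushes the `n`-th term of the lower central series into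
the `(n+1)`-st. Since the series reaches `0`, so does a power of `Δ_X`, and a nilpotent
endomorphism can only have the eigenvalue `0`.
-/

namespace LieModule

variable {R L M : Type*} [CommRing R] [LieRing L] [LieAlgebra R L]
  [AddCommGroup M] [Module R M] [LieRingModule L M] [LieModule R L M]

lemma toEnd_mem_lowerCentralSeries_succ (x : L) {m : M} {n : ℕ}
    (hm : m ∈ lowerCentralSeries R L M n) :
    toEnd R L M x m ∈ lowerCentralSeries R L M (n + 1) := by
  rw [lowerCentralSeries_succ]
  exact LieSubmodule.lie_mem_lie (LieSubmodule.mem_top x) hm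

lemma isNilpotent_of_forall_mem_lowerCentralSeries_succ [IsNilpotent L M] (f : Module.End R M)
    (hf : ∀ n (m : M), m ∈ lowerCentralSeries R L M n → f m ∈ lowerCentralSeries R L M (n + 1)) :
    _root_.IsNilpotent f := by
  obtain ⟨k, hk⟩ := IsNilpotent.nilpotent R L M
  have iterate_mem : ∀ n (m : M), (f ^ n) m ∈ lowerCentralSeries R L M n := by
    intro n
    induction n with
    | zero => simp
    | succ n ih => intro m; rw [pow_succ', Module.End.mul_apply]; exact hf n _ (ih m)
  refine ⟨k, LinearMap.ext fun m => ?_⟩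
  simpa [hk] using iterate_mem k m

lemma isNilpotent_sum_toEnd_sq [IsNilpotent L M] {ι : Type*} (s : Finset ι) (x : ι → L) :
    _root_.IsNilpotent (∑ j ∈ s, toEnd R L M (x j) ^ 2) := by
  refine isNilpotent_of_forall_mem_lowerCentralSeries_succ (L := L) _ fun n m hm => ?_
  rw [LinearMap.sum_apply]
  refine Submodule.sum_mem _ fun j _ => ?_
  rw [sq, Module.End.mul_apply]
  exact antitone_lowerCentralSeries R L M (n + 1).le_succ
    (toEnd_mem_lowerCentralSeries_succ _ (toEnd_mem_lowerCentralSeries_succ _ hm))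

end LieModule

lemma LieAlgebra.ad_sq_apply {R L : Type*} [CommRing R] [LieRing L] [LieAlgebra R L] (x a : L) :
    (ad R L x ^ 2) a = ⁅⁅a, x⁆, x⁆ := by
  rw [sq, Module.End.mul_apply, ad_apply, ad_apply, ← lie_skew x a, lie_neg, lie_skew]

lemma Module.End.eq_zero_of_isNilpotent_of_apply_eq_smul {K V : Type*} [Field K] [AddCommGroup V]
    [Module K V] {f : Module.End K V} (hf : IsNilpotent f) {μ : K} {v : V} (hv : v ≠ 0)
    (hfv : f v = μ • v) : μ = 0 :=
  ((hasEigenvalue_of_hasEigenvector ⟨mem_eigenspace_iff.mpr hfv, hv⟩).isNilpotent_of_isNilpotent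
    hf).eq_zero

/-- For a nilpotent Lie algebra `g` and `x₁, …, x_d ∈ g`, the operator
`Δ_X(a) = ∑_j [[a, x_j], x_j]` is nilpotent; consequently any eigenvalue of `Δ_X`
on a nonzero vector is `0`, i.e. every DMSA on a nilpotent Lie algebra has
`Spec(A) = {0}`. -/
theorem nilpotent_lie_algebra_deltaX_nilpotent (K : Type*) [Field K]
    (L : Type*) [LieRing L] [LieAlgebra K L] [LieRing.IsNilpotent L]
    (d : ℕ) (x : Fin d → L) :
    (∃ k : ℕ, ∀ a : L, (fun a : L => ∑ j, ⁅⁅a, x j⁆, x j⁆)^[k] a = 0) ∧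
      (∀ (y : L) (μ : K), y ≠ 0 → ∑ j, ⁅⁅y, x j⁆, x j⁆ = μ • y → μ = 0) := by
  set Δ : Module.End K L := ∑ j, LieAlgebra.ad K L (x j) ^ 2
  have Δ_apply (a : L) : Δ a = ∑ j, ⁅⁅a, x j⁆, x j⁆ := by
    simp only [Δ, LinearMap.sum_apply, LieAlgebra.ad_sq_apply]
  have Δ_nilpotent : IsNilpotent Δ := LieModule.isNilpotent_sum_toEnd_sq _ x
  refine ⟨?_, fun y μ hy hyμ => ?_⟩
  · obtain ⟨k, hk⟩ := Δ_nilpotent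
    refine ⟨k, fun a => ?_⟩
    have Δ_coe : (fun a : L => ∑ j, ⁅⁅a, x j⁆, x j⁆) = Δ := funext fun a => (Δ_apply a).symm
    rw [Δ_coe, ← Module.End.coe_pow, hk, LinearMap.zero_apply]
  · exact Module.End.eq_zero_of_isNilpotent_of_apply_eq_smul Δ_nilpotent hy ((Δ_apply y).trans hyμ)
end

section
/- Let g be a Lie algebra over ℂ and let x, y ∈ g satisfy [[x,y],y] = λ·x and [[y,x],x] = μ·y with λ ≠ 0 and μ ≠ 0. Set z = [x,y]. Then the linear span of {x, y, z} is a Lie subalgebra of g (indeed [z,y] = λx and [z,x] = −μy), and if x, y, z are linearly independent, this Lie subalgebra is isomorphic as a complex Lie algebra to sl₂(ℂ). -/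
/-!
With `z = ⁅x, y⁆` the two relations say `⁅z, y⁆ = λ x` and `⁅z, x⁆ = -μ y`, so the span of
`x, y, z` is closed under the bracket, and when `x, y, z` are independent its structure constants
depend only on `λ` and `μ`. A linear map sending one basis to another with the same structure
constants is a Lie isomorphism, so it remains to find such a basis in `sl₂(ℂ)`: `ad z` must have
eigenvalues `±β` with `β² = -λμ`, so one can take `z = (β/2) h`, and then `x = e + (μ/4) f`,
`y = -(β/μ) (e - (μ/4) f)` for the standard basis `e, h, f`.
-/

open Module Submodule LieAlgebra.SpecialLinear

section General

variable {R L L' : Type*} [CommRing R] [LieRing L] [LieAlgebra R L] [LieRing L'] [LieAlgebra R L']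

theorem Submodule.lie_mem_span_of_forall_lie_mem {s : Set L}
    (hs : ∀ a ∈ s, ∀ b ∈ s, ⁅a, b⁆ ∈ span R s) {a b : L} (ha : a ∈ span R s)
    (hb : b ∈ span R s) : ⁅a, b⁆ ∈ span R s := by
  induction ha, hb using span_induction₂ with
  | mem_mem a b ha hb => exact hs a ha b hb
  | zero_left b hb => simp
  | zero_right a ha => simp
  | add_left a b c _ _ _ hac hbc => simpa [add_lie] using add_mem hac hbc
  | add_right a b c _ _ _ hab hac => simpa [lie_add] using add_mem hab hac
  | smul_left r a b _ _ hab => simpa [smul_lie] using smul_mem _ r hab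
  | smul_right r a b _ _ hab => simpa [lie_smul] using smul_mem _ r hab

theorem LinearMap.map_lie_of_basis {ι : Type*} (b : Basis ι R L) (f : L →ₗ[R] L')
    (h : ∀ i j, f ⁅b i, b j⁆ = ⁅f (b i), f (b j)⁆) (x y : L) : f ⁅x, y⁆ = ⁅f x, f y⁆ := by
  have := LinearMap.ext_basis (B := (LieModule.toEnd R L L : L →ₗ[R] Module.End R L).compr₂ f)
    (B' := ((LieModule.toEnd R L' L' : L' →ₗ[R] Module.End R L').comp f).compl₂ f) b b h
  exact LinearMap.congr_fun₂ this x y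

noncomputable def LieSubalgebra.basisOfCoeEqSpan {ι : Type*} {v : ι → L}
    (hv : LinearIndependent R v) (S : LieSubalgebra R L)
    (hS : (S : Submodule R L) = span R (Set.range v)) : Basis ι R S :=
  (Basis.span hv).map (LinearEquiv.ofEq _ _ hS.symm)

@[simp]
theorem LieSubalgebra.coe_basisOfCoeEqSpan {ι : Type*} {v : ι → L}
    (hv : LinearIndependent R v) (S : LieSubalgebra R L)
    (hS : (S : Submodule R L) = span R (Set.range v)) (i : ι) :
    (S.basisOfCoeEqSpan hv hS i : L) = v i := by
  simp only [LieSubalgebra.basisOfCoeEqSpan, Basis.map_apply]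
  rw [Basis.span_apply]
  rfl

end General

section Triple

variable {K L M : Type*} [CommRing K] [LieRing L] [LieAlgebra K L] [LieRing M] [LieAlgebra K M]

structure IsDMSATriple (lam mu : K) (x y z : L) : Prop where
  lie_x_y : ⁅x, y⁆ = z
  lie_z_y : ⁅z, y⁆ = lam • x
  lie_z_x : ⁅z, x⁆ = -(mu • y)

namespace IsDMSATriple

variable {lam mu : K} {x y z : L}

theorem of_lie_lie (h1 : ⁅⁅x, y⁆, y⁆ = lam • x) (h2 : ⁅⁅y, x⁆, x⁆ = mu • y) :
    IsDMSATriple lam mu x y ⁅x, y⁆ where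
  lie_x_y := rfl
  lie_z_y := h1
  lie_z_x := by rw [← lie_skew x y, neg_lie, h2]

theorem of_injective {f : M →ₗ⁅K⁆ L} (hf : Function.Injective f) {a b c : M}
    (hf' : IsDMSATriple lam mu (f a) (f b) (f c)) : IsDMSATriple lam mu a b c where
  lie_x_y := hf <| by rw [LieHom.map_lie, hf'.lie_x_y]
  lie_z_y := hf <| by rw [LieHom.map_lie, hf'.lie_z_y, map_smul]
  lie_z_x := hf <| by rw [LieHom.map_lie, hf'.lie_z_x, map_neg, map_smul]

variable (h : IsDMSATriple lam mu x y z)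
include h

theorem lie_y_x : ⁅y, x⁆ = -z := by rw [← lie_skew, h.lie_x_y]

theorem lie_y_z : ⁅y, z⁆ = -(lam • x) := by rw [← lie_skew, h.lie_z_y]

theorem lie_x_z : ⁅x, z⁆ = mu • y := by rw [← lie_skew, h.lie_z_x, neg_neg]

theorem lie_mem_span : ∀ a ∈ ({x, y, z} : Set L), ∀ b ∈ ({x, y, z} : Set L),
    ⁅a, b⁆ ∈ span K {x, y, z} := by
  have hx : x ∈ span K {x, y, z} := subset_span (by simp)
  have hy : y ∈ span K {x, y, z} := subset_span (by simp)
  have hz : z ∈ span K {x, y, z} := subset_span (by simp)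
  simp only [Set.mem_insert_iff, Set.mem_singleton_iff]
  rintro a (rfl | rfl | rfl) b (rfl | rfl | rfl) <;>
    simp [h.lie_x_y, h.lie_y_x, h.lie_x_z, h.lie_z_x, h.lie_y_z, h.lie_z_y, hx, hy, hz,
      smul_mem]

theorem exists_lieSubalgebra_coe_eq_span :
    ∃ S : LieSubalgebra K L, (S : Submodule K L) = span K {x, y, z} :=
  (span K {x, y, z}).exists_lieSubalgebra_coe_eq_iff.mpr fun _ _ ha hb =>
    lie_mem_span_of_forall_lie_mem h.lie_mem_span ha hb

end IsDMSATriple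

theorem IsDMSATriple.nonempty_lieEquiv {lam mu : K} {b : Basis (Fin 3) K L}
    {b' : Basis (Fin 3) K M} (h : IsDMSATriple lam mu (b 0) (b 1) (b 2))
    (h' : IsDMSATriple lam mu (b' 0) (b' 1) (b' 2)) : Nonempty (L ≃ₗ⁅K⁆ M) := by
  let e := b.equiv b' (Equiv.refl _)
  have he : ∀ i, e (b i) = b' i := fun i => b.equiv_apply i b' (Equiv.refl _)
  have hmap : ∀ x y, e ⁅x, y⁆ = ⁅e x, e y⁆ := (e : L →ₗ[K] M).map_lie_of_basis b fun i j => by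
    fin_cases i <;> fin_cases j <;>
      simp [he, h.lie_x_y, h.lie_y_x, h.lie_x_z, h.lie_z_x, h.lie_y_z, h.lie_z_y,
        h'.lie_x_y, h'.lie_y_x, h'.lie_x_z, h'.lie_z_x, h'.lie_y_z, h'.lie_z_y]
  exact ⟨{ e with map_lie' := fun {x y} => hmap x y }⟩

end Triple

namespace LieAlgebra.SpecialLinear

variable {K : Type*} [Field K]

theorem mem_sl_fin_two (a b c : K) : !![a, b; c, -a] ∈ sl (Fin 2) K := by
  simp [sl, Matrix.trace_fin_two]

def dmsaTriple (mu β : K) : Fin 3 → sl (Fin 2) K :=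
  ![⟨!![0, 1; mu / 4, 0], by simpa using mem_sl_fin_two 0 1 (mu / 4)⟩,
    ⟨!![0, -β / mu; β / 4, 0], by simpa using mem_sl_fin_two 0 (-β / mu) (β / 4)⟩,
    ⟨!![β / 2, 0; 0, -(β / 2)], mem_sl_fin_two _ _ _⟩]

variable {lam mu β : K}

theorem isDMSATriple_dmsaTriple (htwo : (2 : K) ≠ 0) (hmu : mu ≠ 0)
    (hβ : β ^ 2 = -(lam * mu)) :
    IsDMSATriple lam mu (dmsaTriple mu β 0) (dmsaTriple mu β 1) (dmsaTriple mu β 2) := by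
  have hfour : (4 : K) ≠ 0 := by simpa [show (4 : K) = 2 * 2 by norm_num]
  constructor <;> ext i j <;> fin_cases i <;> fin_cases j <;>
    simp [dmsaTriple, Ring.lie_def] <;> field_simp
  all_goals first | ring1 | linear_combination -2 * hβ

theorem linearIndependent_dmsaTriple (htwo : (2 : K) ≠ 0) (hmu : mu ≠ 0) (hβ : β ≠ 0) :
    LinearIndependent K (dmsaTriple mu β) := by
  have hfour : (4 : K) ≠ 0 := by simpa [show (4 : K) = 2 * 2 by norm_num]
  rw [Fintype.linearIndependent_iff]
  intro g hg
  have entry (i j : Fin 2) := congrArg (fun A : sl (Fin 2) K => A.val i j) hg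
  have e00 := entry 0 0
  have e01 := entry 0 1
  have e10 := entry 1 0
  simp [Fin.sum_univ_three, dmsaTriple] at e00 e01 e10
  have hg2 : g 2 = 0 := by simpa [hβ, htwo] using e00
  have hg1 : g 1 = 0 := by
    have : 2 * (g 1 * β) = 0 := by
      field_simp at e01 e10
      linear_combination e10 - e01
    simpa [htwo, hβ] using this
  have hg0 : g 0 = 0 := by simpa [hg1] using e01
  intro i
  fin_cases i <;> assumption

theorem span_dmsaTriple_eq_top (htwo : (2 : K) ≠ 0) (hmu : mu ≠ 0) (hβ : β ≠ 0) :
    ⊤ ≤ span K (Set.range (dmsaTriple mu β)) := by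
  have hfour : (4 : K) ≠ 0 := by simpa [show (4 : K) = 2 * 2 by norm_num]
  rintro ⟨A, hA⟩ -
  have htrace : A 1 1 = -A 0 0 := by
    simp only [sl, LieSubalgebra.mem_mk_iff', LinearMap.mem_ker, Matrix.traceLinearMap_apply,
      Matrix.trace_fin_two] at hA
    linear_combination hA
  rw [mem_span_range_iff_exists_fun]
  refine ⟨![A 0 1 / 2 + 2 * A 1 0 / mu, (4 * A 1 0 - A 0 1 * mu) / (2 * β), 2 * A 0 0 / β], ?_⟩
  ext i j
  fin_cases i <;> fin_cases j <;> simp [Fin.sum_univ_three, dmsaTriple, htrace] <;>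
    field_simp <;> ring

noncomputable def dmsaBasis (htwo : (2 : K) ≠ 0) (hmu : mu ≠ 0) (hβ : β ≠ 0) :
    Module.Basis (Fin 3) K (sl (Fin 2) K) :=
  .mk (linearIndependent_dmsaTriple htwo hmu hβ) (span_dmsaTriple_eq_top htwo hmu hβ)

theorem isDMSATriple_dmsaBasis (htwo : (2 : K) ≠ 0) (hmu : mu ≠ 0) (hβ : β ^ 2 = -(lam * mu))
    (hβ0 : β ≠ 0) :
    IsDMSATriple lam mu (dmsaBasis htwo hmu hβ0 0) (dmsaBasis htwo hmu hβ0 1)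
      (dmsaBasis htwo hmu hβ0 2) := by
  simpa only [dmsaBasis, Basis.coe_mk] using isDMSATriple_dmsaTriple htwo hmu hβ

end LieAlgebra.SpecialLinear

/-- Classification of 2-dimensional DMSAs with `λ ≠ 0`, `μ ≠ 0`: if
`[[x,y],y] = λx` and `[[y,x],x] = μy`, then with `z = [x,y]` one has `[z,y] = λx`
and `[z,x] = −μy`, the span of `{x,y,z}` is a Lie subalgebra, and if `x, y, z` are
linearly independent this Lie subalgebra is isomorphic to `sl₂(ℂ)`. -/
theorem dim_two_dmsa_classification_sl2 (L : Type*) [LieRing L] [LieAlgebra ℂ L]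
    (x y : L) (lam mu : ℂ) (hlam : lam ≠ 0) (hmu : mu ≠ 0)
    (h1 : ⁅⁅x, y⁆, y⁆ = lam • x) (h2 : ⁅⁅y, x⁆, x⁆ = mu • y)
    (z : L) (hz : z = ⁅x, y⁆) :
    ⁅z, y⁆ = lam • x ∧ ⁅z, x⁆ = -(mu • y) ∧
      ∃ S : LieSubalgebra ℂ L,
        (S : Submodule ℂ L) = Submodule.span ℂ {x, y, z} ∧
        (LinearIndependent ℂ ![x, y, z] →
          Nonempty (S ≃ₗ⁅ℂ⁆ LieAlgebra.SpecialLinear.sl (Fin 2) ℂ)) := by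
  have hT : IsDMSATriple lam mu x y z := hz ▸ .of_lie_lie h1 h2
  obtain ⟨S, hS⟩ := hT.exists_lieSubalgebra_coe_eq_span
  refine ⟨hT.lie_z_y, hT.lie_z_x, S, hS, fun hli => ?_⟩
  have hS' : (S : Submodule ℂ L) = span ℂ (Set.range ![x, y, z]) := by
    rw [hS]
    congr 1
    ext
    simp [eq_comm, or_comm, or_left_comm]
  have hTS : IsDMSATriple lam mu (S.basisOfCoeEqSpan hli hS' 0) (S.basisOfCoeEqSpan hli hS' 1)
      (S.basisOfCoeEqSpan hli hS' 2) :=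
    .of_injective (f := S.incl) Subtype.val_injective (by simpa using hT)
  obtain ⟨β, hβ⟩ := IsAlgClosed.exists_pow_nat_eq (-(lam * mu)) two_pos
  have hβ0 : β ≠ 0 := by
    rintro rfl
    simp [hlam, hmu] at hβ
  exact hTS.nonempty_lieEquiv (isDMSATriple_dmsaBasis two_ne_zero hmu hβ hβ0)
end

section
/- Let X₁,…,X_d be Hermitian n×n complex matrices and μ₁,…,μ_d complex numbers such that ∑_{j=1}^d [[X_i, X_j], X_j] = μ_i·X_i for every i, where [A,B] = AB − BA. Then for every index i with X_i ≠ 0, the number μ_i is real (and in fact nonnegative). In particular, unless all μ_i are real, the only Hermitian representation of U_d(A) is the trivial one with all X_i = 0. -/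
open scoped Matrix BigOperators ComplexOrder

/-!
Multiply the `i`-th relation by `X i` and take traces. With `C j = X i * X j - X j * X i`,
which is skew-Hermitian, each summand on the left becomes `trace (C jᴴ * C j) ≥ 0`, while the
right-hand side is `μ i * trace (X iᴴ * X i)` with a positive trace since `X i ≠ 0`.
So `μ i` is a nonnegative real number, i.e. `0 ≤ μ i` in the order of `ℂ`.
-/

namespace Matrix

variable {m R : Type*} [Fintype m]

theorem trace_conjTranspose_mul_self_pos [PartialOrder R] [Ring R] [StarRing R]
    [StarOrderedRing R] [NoZeroDivisors R] {A : Matrix m m R} (hA : A ≠ 0) :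
    0 < trace (Aᴴ * A) :=
  (posSemidef_conjTranspose_mul_self A).trace_nonneg.lt_of_ne'
    (trace_conjTranspose_mul_self_eq_zero_iff.not.mpr hA)

theorem trace_commutator_commutator_mul [CommRing R] (A B : Matrix m m R) :
    trace (((A * B - B * A) * B - B * (A * B - B * A)) * A) =
      -trace ((A * B - B * A) * (A * B - B * A)) := by
  set C := A * B - B * A
  calc trace ((C * B - B * C) * A) = trace (C * (B * A)) - trace (C * (A * B)) := by
        rw [sub_mul, trace_sub, mul_assoc, mul_assoc, trace_mul_comm B, mul_assoc]
    _ = -trace (C * C) := by rw [← trace_sub, ← mul_sub, ← neg_sub, mul_neg, trace_neg]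

theorem IsHermitian.conjTranspose_commutator [NonUnitalRing R] [StarRing R]
    {A B : Matrix m m R} (hA : A.IsHermitian) (hB : B.IsHermitian) :
    (A * B - B * A)ᴴ = -(A * B - B * A) := by
  rw [conjTranspose_sub, conjTranspose_mul, conjTranspose_mul, hA.eq, hB.eq, neg_sub]

theorem IsHermitian.trace_commutator_commutator_mul [CommRing R] [StarRing R]
    {A B : Matrix m m R} (hA : A.IsHermitian) (hB : B.IsHermitian) :
    trace (((A * B - B * A) * B - B * (A * B - B * A)) * A) =
      trace ((A * B - B * A)ᴴ * (A * B - B * A)) := by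
  rw [Matrix.trace_commutator_commutator_mul, hA.conjTranspose_commutator hB, neg_mul, trace_neg]

end Matrix

open Matrix

/-- If Hermitian matrices `X₁, …, X_d` satisfy `∑_j [[X_i, X_j], X_j] = μ_i X_i`,
then for every `i` with `X_i ≠ 0` the number `μ_i` is real and nonnegative.
In particular, unless all `μ_i` are real, the only Hermitian representation of
`U_d(A)` is the trivial one. -/
theorem hermitian_rep_spectrum_real_nonneg (n d : ℕ)
    (X : Fin d → Matrix (Fin n) (Fin n) ℂ) (μ : Fin d → ℂ)
    (hherm : ∀ i, (X i)ᴴ = X i)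
    (hrel : ∀ i, ∑ j, ((X i * X j - X j * X i) * X j - X j * (X i * X j - X j * X i)) =
      μ i • X i)
    (i : Fin d) (hXi : X i ≠ 0) :
    (μ i).im = 0 ∧ 0 ≤ (μ i).re := by
  have hX : ∀ j, (X j).IsHermitian := hherm
  have key : ∑ j, trace ((X i * X j - X j * X i)ᴴ * (X i * X j - X j * X i)) =
      μ i * trace ((X i)ᴴ * X i) := by
    have h := congrArg (fun M => trace (M * X i)) (hrel i)
    simp only [Finset.sum_mul, trace_sum, smul_mul, trace_smul, smul_eq_mul] at h
    rw [hherm i, ← h]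
    exact Finset.sum_congr rfl fun j _ =>
      ((hX i).trace_commutator_commutator_mul (hX j)).symm
  have hsum : 0 * trace ((X i)ᴴ * X i) ≤ μ i * trace ((X i)ᴴ * X i) := by
    rw [zero_mul, ← key]
    exact Finset.sum_nonneg fun j _ => (posSemidef_conjTranspose_mul_self _).trace_nonneg
  obtain ⟨hre, him⟩ := Complex.nonneg_iff.mp
    (le_of_mul_le_mul_right hsum (trace_conjTranspose_mul_self_pos hXi))
  exact ⟨him.symm, hre⟩
end
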